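/- arXiv:1906.11237 — 10 statements merged into one kernel-verified Lean document; each statement's English description precedes it below -/
import Mathlib

section
/- Let f : 2^N → ℝ be a non-negative submodular function on a finite ground set N, let p ∈ [0,1], and let μ be a probability distribution over the subsets of N such that for every element u ∈ N the probability that a set A drawn from μ contains u is at most p. Then the expectation E_{A∼μ}[f(A)] ≥ (1 − p) · f(∅). -/
open Finset

/-- A set function `f` on a finite ground set is submodular if
`f(A ∪ {u}) − f(A) ≥ f(B ∪ {u}) − f(B)` for all `A ⊆ B` and `u ∉ B`. -/
def Submodular {α : Type*} [DecidableEq α] (f : Finset α → ℝ) : Prop :=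
  ∀ A B : Finset α, A ⊆ B → ∀ u ∉ B, f (insert u A) - f A ≥ f (insert u B) - f B

/-- The multilinear extension `F` of a set function `f`. -/
noncomputable def multilinear {α : Type*} [Fintype α] [DecidableEq α]
    (f : Finset α → ℝ) (x : α → ℝ) : ℝ :=
  ∑ A : Finset α, f A * ((∏ u ∈ A, x u) * ∏ u ∈ Aᶜ, (1 - x u))

/-- Abel summation lower bound: if `F ≥ 0` and `x` is antitone (up to `n`) then
`∑_{i<n} x i (F(i+1) - F i) ≥ x n F n - x 0 F 0`. -/
lemma abel_aux (F x : ℕ → ℝ) (hF : ∀ i, 0 ≤ F i) :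
    ∀ n, (∀ i, i + 1 ≤ n → x (i+1) ≤ x i) →
      x n * F n - x 0 * F 0 ≤ ∑ i ∈ Finset.range n, x i * (F (i+1) - F i) := by
  intro n
  induction n with
  | zero => intro _; simp
  | succ n ih =>
    intro hx
    rw [Finset.sum_range_succ]
    have ih' := ih (fun i hi => hx i (le_trans hi (Nat.le_succ n)))
    have h1 : x (n+1) * F (n+1) ≤ x n * F (n+1) :=
      mul_le_mul_of_nonneg_right (hx n le_rfl) (hF _)
    have h2 : x n * (F (n+1) - F n) = x n * F (n+1) - x n * F n := mul_sub _ _ _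
    linarith

/-- If `f` is non-negative and submodular, `p ∈ [0,1]`, and `μ` is a
probability distribution over subsets of the ground set in which every element appears
with probability at most `p`, then `E_{A∼μ}[f(A)] ≥ (1 − p)·f(∅)`. -/
theorem stmt_0 {α : Type*} [Fintype α] [DecidableEq α] (f : Finset α → ℝ)
    (hf0 : ∀ A : Finset α, 0 ≤ f A) (hsub : Submodular f)
    (p : ℝ) (hp : p ∈ Set.Icc (0 : ℝ) 1)
    (μ : Finset α → ℝ) (hμ0 : ∀ A : Finset α, 0 ≤ μ A)
    (hμ1 : ∑ A : Finset α, μ A = 1)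
    (hmarg : ∀ u : α,
      ∑ A ∈ (Finset.univ : Finset (Finset α)).filter (fun A => u ∈ A), μ A ≤ p) :
    (1 - p) * f ∅ ≤ ∑ A : Finset α, μ A * f A := by
  classical
  obtain ⟨hp0, hp1⟩ := hp
  set marg : α → ℝ :=
    fun u => ∑ A ∈ (Finset.univ : Finset (Finset α)).filter (fun A => u ∈ A), μ A with hmargdef
  have hmarg0 : ∀ u, 0 ≤ marg u := fun u => Finset.sum_nonneg (fun A _ => hμ0 A)
  -- a list of all elements sorted by decreasing marginal
  let r : α → α → Prop := fun a b => marg b ≤ marg a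
  haveI : DecidableRel r := fun a b => inferInstanceAs (Decidable (_ ≤ _))
  haveI : IsTotal α r := ⟨fun a b => le_total (marg b) (marg a)⟩
  haveI : IsTrans α r := ⟨fun a b c hab hbc => le_trans hbc hab⟩
  set l : List α := List.insertionSort r (Finset.univ : Finset α).toList with hldef
  have hperm : List.Perm l (Finset.univ : Finset α).toList := List.perm_insertionSort r _
  have hnodup : l.Nodup := hperm.nodup_iff.mpr (Finset.nodup_toList _)
  have hsorted : l.Pairwise r := List.pairwise_insertionSort r _
  have hmem : ∀ u : α, u ∈ l := fun u => hperm.mem_iff.mpr (Finset.mem_toList.mpr (mem_univ u))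
  set n := l.length with hn
  set S : ℕ → Finset α := fun i => (l.take i).toFinset with hSdef
  have hS0 : S 0 = ∅ := by simp [hSdef]
  have hSn : S n = Finset.univ := by
    apply Finset.eq_univ_iff_forall.mpr
    intro u
    simp only [hSdef, hn, List.take_length, List.mem_toFinset]
    exact hmem u
  have hSstep : ∀ i (h : i < n), S (i+1) = insert (l.get ⟨i, h⟩) (S i) := by
    intro i h
    simp only [hSdef]
    rw [← List.take_concat_get h, List.concat_eq_append, List.toFinset_append,
      Finset.union_comm]
    simp only [List.toFinset_cons, List.toFinset_nil, Finset.insert_union, Finset.empty_union,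
      List.get_eq_getElem]
  have hnotmem : ∀ i (h : i < n), l.get ⟨i, h⟩ ∉ S i := by
    intro i h hcon
    simp only [hSdef, List.mem_toFinset] at hcon
    have hd : l.get ⟨i, h⟩ ∈ l.drop i := by
      rw [List.drop_eq_getElem_cons h]
      exact List.mem_cons_self
    have hsplit : (l.take i ++ l.drop i).Nodup := by rw [List.take_append_drop]; exact hnodup
    exact (List.disjoint_of_nodup_append hsplit) hcon hd
  have hsdiff : ∀ i (h : i < n), S (i+1) \ S i = {l.get ⟨i, h⟩} := by
    intro i h
    rw [hSstep i h]
    ext a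
    simp only [Finset.mem_sdiff, Finset.mem_insert, Finset.mem_singleton]
    constructor
    · rintro ⟨ha | ha, hna⟩
      · exact ha
      · exact absurd ha hna
    · rintro rfl
      exact ⟨Or.inl rfl, hnotmem i h⟩
  -- indicator and weights
  set χ : Finset α → ℕ → ℝ :=
    fun A i => if ((S (i+1) \ S i).Nonempty ∧ S (i+1) \ S i ⊆ A) then 1 else 0 with hχdef
  have hχ : ∀ (A : Finset α) i (h : i < n),
      χ A i = if l.get ⟨i, h⟩ ∈ A then (1:ℝ) else 0 := by
    intro A i h
    simp only [hχdef, hsdiff i h]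
    congr 1
    simp [Finset.singleton_subset_iff, Finset.singleton_nonempty]
  have hχn : ∀ (A : Finset α) i, n ≤ i → χ A i = 0 := by
    intro A i hi
    have h1 : S (i+1) = l.toFinset := by
      simp only [hSdef]; rw [List.take_of_length_le (by omega)]
    have h2 : S i = l.toFinset := by
      simp only [hSdef]; rw [List.take_of_length_le (by omega)]
    simp [hχdef, h1, h2]
  -- greedy inequality
  have greedy : ∀ A : Finset α,
      f ∅ + ∑ i ∈ Finset.range n, χ A i * (f (S (i+1)) - f (S i)) ≤ f A := by
    intro A
    have step : ∀ i ∈ Finset.range n,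
        χ A i * (f (S (i+1)) - f (S i)) ≤ f (A ∩ S (i+1)) - f (A ∩ S i) := by
      intro i hi
      rw [Finset.mem_range] at hi
      rw [hχ A i hi]
      by_cases hmemA : l.get ⟨i, hi⟩ ∈ A
      · rw [if_pos hmemA, one_mul]
        have h1 : A ∩ S (i+1) = insert (l.get ⟨i, hi⟩) (A ∩ S i) := by
          rw [hSstep i hi, Finset.inter_insert_of_mem hmemA]
        have h2 := hsub (A ∩ S i) (S i) (Finset.inter_subset_right) (l.get ⟨i, hi⟩)
          (hnotmem i hi)
        rw [h1, hSstep i hi]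
        linarith [h2]
      · rw [if_neg hmemA, zero_mul]
        have h1 : A ∩ S (i+1) = A ∩ S i := by
          rw [hSstep i hi, Finset.inter_insert_of_notMem hmemA]
        rw [h1]
        simp
    have tele : ∑ i ∈ Finset.range n, (f (A ∩ S (i+1)) - f (A ∩ S i)) = f A - f ∅ := by
      rw [Finset.sum_range_sub (fun i => f (A ∩ S i))]
      rw [hSn, hS0, Finset.inter_univ, Finset.inter_empty]
    have := Finset.sum_le_sum step
    rw [tele] at this
    linarith
  -- the weights x
  set x : ℕ → ℝ := fun i => ∑ A : Finset α, μ A * χ A i with hxdef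
  have hx_marg : ∀ i (h : i < n), x i = marg (l.get ⟨i, h⟩) := by
    intro i h
    simp only [hxdef, hmargdef]
    rw [Finset.sum_filter]
    apply Finset.sum_congr rfl
    intro A _
    rw [hχ A i h]
    by_cases hA : l.get ⟨i, h⟩ ∈ A <;> simp [hA]
  have hx_n : ∀ i, n ≤ i → x i = 0 := by
    intro i hi
    simp only [hxdef]
    apply Finset.sum_eq_zero
    intro A _
    rw [hχn A i hi, mul_zero]
  have hx_anti : ∀ i, i + 1 ≤ n → x (i+1) ≤ x i := by
    intro i hi
    rcases lt_or_eq_of_le hi with hlt | heq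
    · have hsi : i + 1 < l.length := by rw [← hn]; exact hlt
      have hii : i < l.length := by omega
      rw [hx_marg (i+1) hlt, hx_marg i (by omega)]
      exact hsorted.rel_get_of_lt (a := ⟨i, hii⟩) (b := ⟨i+1, hsi⟩) (by simp [Fin.lt_def])
    · rw [hx_n (i+1) (le_of_eq heq.symm), hx_marg i (by omega)]
      exact hmarg0 _
  have hx0p : x 0 ≤ p := by
    rcases Nat.eq_zero_or_pos n with h0 | h0
    · rw [hx_n 0 (le_of_eq h0)]; exact hp0
    · rw [hx_marg 0 h0]; exact hmarg _
  -- Abel bound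
  have habel : -(p * f ∅) ≤ ∑ i ∈ Finset.range n, x i * (f (S (i+1)) - f (S i)) := by
    have h := abel_aux (fun i => f (S i)) x (fun i => hf0 _) n hx_anti
    have hxn0 : 0 ≤ x n * f (S n) := by
      apply mul_nonneg _ (hf0 _)
      rw [hx_n n le_rfl]
    have hx00 : 0 ≤ x 0 := by
      simp only [hxdef]
      apply Finset.sum_nonneg
      intro A _
      apply mul_nonneg (hμ0 A)
      simp only [hχdef]
      split <;> norm_num
    have hxf : x 0 * f (S 0) ≤ p * f ∅ := by
      rw [hS0]
      exact mul_le_mul_of_nonneg_right hx0p (hf0 _)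
    linarith
  -- put it together
  have main : f ∅ + ∑ i ∈ Finset.range n, x i * (f (S (i+1)) - f (S i))
      ≤ ∑ A : Finset α, μ A * f A := by
    have h1 : ∀ A : Finset α,
        μ A * (f ∅ + ∑ i ∈ Finset.range n, χ A i * (f (S (i+1)) - f (S i))) ≤ μ A * f A :=
      fun A => mul_le_mul_of_nonneg_left (greedy A) (hμ0 A)
    have h2 := Finset.sum_le_sum (fun A (_ : A ∈ Finset.univ) => h1 A)
    calc f ∅ + ∑ i ∈ Finset.range n, x i * (f (S (i+1)) - f (S i))
        = ∑ A : Finset α, μ A * (f ∅ + ∑ i ∈ Finset.range n, χ A i * (f (S (i+1)) - f (S i))) := by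
          rw [Finset.sum_congr rfl (fun A _ => mul_add (μ A) (f ∅) _), Finset.sum_add_distrib]
          congr 1
          · rw [← Finset.sum_mul, hμ1, one_mul]
          · simp only [hxdef, Finset.sum_mul, Finset.mul_sum, mul_assoc]
            rw [Finset.sum_comm]
      _ ≤ ∑ A : Finset α, μ A * f A := h2
  linarith [habel, main]
end

section
/- Let f : 2^N → ℝ be a non-negative submodular function on a finite ground set N with multilinear extension F, let p ∈ [0,1], and let x, y ∈ [0,1]^N be two vectors such that supp(x) ∩ supp(y) = ∅ and y_u ≤ p for every u ∈ N. Then F(x + y) ≥ (1 − p) · F(x). -/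
open Finset

namespace Stmt1Aux

variable {α : Type*} [Fintype α] [DecidableEq α]


noncomputable def tw (x : α → ℝ) (u : α) (A : Finset α) : ℝ :=
  (∏ v ∈ A, x v) * ∏ v ∈ Aᶜ.erase u, (1 - x v)

lemma tw_update {x : α → ℝ} {u : α} (c : ℝ) {A : Finset α} (hA : u ∉ A) :
    tw (Function.update x u c) u A = tw x u A := by
  unfold tw
  congr 1
  · refine Finset.prod_congr rfl fun v hv => ?_
    have : v ≠ u := fun h => hA (h ▸ hv)
    rw [Function.update_of_ne this]
  · exact Finset.prod_congr rfl fun v hv => by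
      rw [Function.update_of_ne (Finset.ne_of_mem_erase hv)]

lemma ml_split (f : Finset α → ℝ) (x : α → ℝ) (u : α) :
    multilinear f x = ∑ A ∈ univ.filter (fun A : Finset α => u ∉ A),
      ((1 - x u) * f A + x u * f (insert u A)) * tw x u A := by
  unfold multilinear
  rw [← Finset.sum_filter_add_sum_filter_not univ (fun A : Finset α => u ∉ A)]
  have h1 : ∑ A ∈ univ.filter (fun A : Finset α => u ∉ A),
      f A * ((∏ v ∈ A, x v) * ∏ v ∈ Aᶜ, (1 - x v))
      = ∑ A ∈ univ.filter (fun A : Finset α => u ∉ A),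
        ((1 - x u) * f A) * tw x u A := by
    refine Finset.sum_congr rfl fun A hA => ?_
    have hu : u ∉ A := (Finset.mem_filter.mp hA).2
    have huc : u ∈ Aᶜ := Finset.mem_compl.mpr hu
    rw [← Finset.mul_prod_erase Aᶜ (fun v => 1 - x v) huc]
    unfold tw; ring
  have h2 : ∑ A ∈ univ.filter (fun A : Finset α => ¬ u ∉ A),
      f A * ((∏ v ∈ A, x v) * ∏ v ∈ Aᶜ, (1 - x v))
      = ∑ A ∈ univ.filter (fun A : Finset α => u ∉ A),
        (x u * f (insert u A)) * tw x u A := by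
    refine Finset.sum_nbij' (fun A => A.erase u) (fun A => insert u A) ?_ ?_ ?_ ?_ ?_
    · intro A hA
      simp only [Finset.mem_filter, Finset.mem_univ, true_and] at *
      exact Finset.notMem_erase u A
    · intro A hA
      simp only [Finset.mem_filter, Finset.mem_univ, true_and, not_not] at *
      exact Finset.mem_insert_self u A
    · intro A hA
      simp only [Finset.mem_filter, Finset.mem_univ, true_and, not_not] at hA
      exact Finset.insert_erase hA
    · intro A hA
      simp only [Finset.mem_filter, Finset.mem_univ, true_and] at hA
      exact Finset.erase_insert hA
    · intro A hA
      simp only [Finset.mem_filter, Finset.mem_univ, true_and, not_not] at hA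
      have h3 : insert u (A.erase u) = A := Finset.insert_erase hA
      rw [h3]
      unfold tw
      rw [Finset.compl_erase, Finset.erase_insert (Finset.mem_compl.not.mpr (not_not.mpr hA)),
        ← Finset.mul_prod_erase A x hA]
      ring
  rw [h1, h2, ← Finset.sum_add_distrib]
  exact Finset.sum_congr rfl fun A hA => by ring

lemma ml_upd0 (f : Finset α → ℝ) (x : α → ℝ) (u : α) :
    multilinear f (Function.update x u 0) = ∑ A ∈ univ.filter (fun A : Finset α => u ∉ A),
      f A * tw x u A := by
  rw [ml_split f _ u]
  refine Finset.sum_congr rfl fun A hA => ?_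
  have hu : u ∉ A := (Finset.mem_filter.mp hA).2
  rw [tw_update 0 hu, Function.update_self]
  ring

lemma ml_upd1 (f : Finset α → ℝ) (x : α → ℝ) (u : α) :
    multilinear f (Function.update x u 1) = ∑ A ∈ univ.filter (fun A : Finset α => u ∉ A),
      f (insert u A) * tw x u A := by
  rw [ml_split f _ u]
  refine Finset.sum_congr rfl fun A hA => ?_
  have hu : u ∉ A := (Finset.mem_filter.mp hA).2
  rw [tw_update 1 hu, Function.update_self]
  ring

lemma ml_cond (f : Finset α → ℝ) (x : α → ℝ) (u : α) :
    multilinear f x = (1 - x u) * multilinear f (Function.update x u 0)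
      + x u * multilinear f (Function.update x u 1) := by
  rw [ml_split f x u, ml_upd0, ml_upd1, Finset.mul_sum, Finset.mul_sum,
    ← Finset.sum_add_distrib]
  exact Finset.sum_congr rfl fun A hA => by ring

noncomputable def mder (f : Finset α → ℝ) (x : α → ℝ) (u : α) : ℝ :=
  ∑ A ∈ univ.filter (fun A : Finset α => u ∉ A),
    (f (insert u A) - f A) * tw x u A

lemma mix_eq (f : Finset α → ℝ) (x : α → ℝ) (u : α) :
    multilinear f (Function.update x u 1) - multilinear f (Function.update x u 0) = mder f x u := by
  unfold mder
  rw [ml_upd0, ml_upd1, ← Finset.sum_sub_distrib]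
  exact Finset.sum_congr rfl fun A hA => by ring

lemma mder_update_u (f : Finset α → ℝ) (x : α → ℝ) (u : α) (c : ℝ) :
    mder f (Function.update x u c) u = mder f x u := by
  unfold mder
  refine Finset.sum_congr rfl fun A hA => ?_
  rw [tw_update c (Finset.mem_filter.mp hA).2]

lemma mder_cond (f : Finset α → ℝ) (x : α → ℝ) {u v : α} (huv : u ≠ v) :
    mder f x u = (1 - x v) * mder f (Function.update x v 0) u
      + x v * mder f (Function.update x v 1) u := by
  rw [← mix_eq f x u, ml_cond f (Function.update x u 1) v,
    ml_cond f (Function.update x u 0) v,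
    Function.update_of_ne huv.symm (1:ℝ) x, Function.update_of_ne huv.symm (0:ℝ) x,
    Function.update_comm huv (1:ℝ) (0:ℝ) x,
    Function.update_comm huv (1:ℝ) (1:ℝ) x,
    Function.update_comm huv (0:ℝ) (0:ℝ) x,
    Function.update_comm huv (0:ℝ) (1:ℝ) x,
    ← mix_eq f (Function.update x v 0) u, ← mix_eq f (Function.update x v 1) u]
  ring

lemma anti_step (f : Finset α → ℝ) (hsub : Submodular f) (x : α → ℝ)
    (hx : ∀ w, 0 ≤ x w ∧ x w ≤ 1) {u v : α} (huv : u ≠ v) :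
    mder f (Function.update x v 1) u ≤ mder f (Function.update x v 0) u := by
  have e1 : mder f (Function.update x v 1) u
      = ∑ A ∈ univ.filter (fun A : Finset α => u ∉ A ∧ v ∈ A),
        (f (insert u A) - f A) * ((∏ w ∈ A.erase v, x w) * ∏ w ∈ Aᶜ.erase u, (1 - x w)) := by
    unfold mder
    rw [← Finset.sum_filter_add_sum_filter_not (univ.filter (fun A : Finset α => u ∉ A))
      (fun A => v ∈ A), Finset.filter_filter, Finset.filter_filter]
    have hz : ∑ A ∈ univ.filter (fun A : Finset α => u ∉ A ∧ v ∉ A),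
        (f (insert u A) - f A) * tw (Function.update x v 1) u A = 0 := by
      refine Finset.sum_eq_zero fun A hA => ?_
      obtain ⟨-, hu, hv⟩ := Finset.mem_filter.mp hA
      have hvm : v ∈ Aᶜ.erase u := Finset.mem_erase.mpr ⟨huv.symm, Finset.mem_compl.mpr hv⟩
      have : tw (Function.update x v 1) u A = 0 := by
        unfold tw
        rw [Finset.prod_eq_zero hvm (by rw [Function.update_self]; ring)]
        ring
      rw [this]; ring
    rw [hz, add_zero]
    refine Finset.sum_congr rfl fun A hA => ?_
    obtain ⟨-, hu, hv⟩ := Finset.mem_filter.mp hA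
    congr 1
    unfold tw
    congr 1
    · rw [← Finset.mul_prod_erase A _ hv, Function.update_self, one_mul]
      exact Finset.prod_congr rfl fun w hw => Function.update_of_ne (Finset.ne_of_mem_erase hw) _ _
    · refine Finset.prod_congr rfl fun w hw => ?_
      have : w ≠ v := fun h => (Finset.mem_compl.mp (Finset.mem_of_mem_erase hw)) (h ▸ hv)
      rw [Function.update_of_ne this]
  have e0 : mder f (Function.update x v 0) u
      = ∑ A ∈ univ.filter (fun A : Finset α => u ∉ A ∧ v ∉ A),
        (f (insert u A) - f A) * ((∏ w ∈ A, x w) * ∏ w ∈ (Aᶜ.erase u).erase v, (1 - x w)) := by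
    unfold mder
    rw [← Finset.sum_filter_add_sum_filter_not (univ.filter (fun A : Finset α => u ∉ A))
      (fun A => v ∈ A), Finset.filter_filter, Finset.filter_filter]
    have hz : ∑ A ∈ univ.filter (fun A : Finset α => u ∉ A ∧ v ∈ A),
        (f (insert u A) - f A) * tw (Function.update x v 0) u A = 0 := by
      refine Finset.sum_eq_zero fun A hA => ?_
      obtain ⟨-, hu, hv⟩ := Finset.mem_filter.mp hA
      have : tw (Function.update x v 0) u A = 0 := by
        unfold tw
        rw [Finset.prod_eq_zero hv (Function.update_self v 0 x)]
        ring
      rw [this]; ring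
    rw [hz, zero_add]
    refine Finset.sum_congr rfl fun A hA => ?_
    obtain ⟨-, hu, hv⟩ := Finset.mem_filter.mp hA
    congr 1
    unfold tw
    congr 1
    · refine Finset.prod_congr rfl fun w hw => ?_
      have : w ≠ v := fun h => hv (h ▸ hw)
      rw [Function.update_of_ne this]
    · have hvm : v ∈ Aᶜ.erase u := Finset.mem_erase.mpr ⟨huv.symm, Finset.mem_compl.mpr hv⟩
      rw [← Finset.mul_prod_erase _ _ hvm, Function.update_self, sub_zero, one_mul]
      exact Finset.prod_congr rfl fun w hw => by
        rw [Function.update_of_ne (Finset.ne_of_mem_erase hw)]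
  rw [e1, e0]
  have e2 : ∑ A ∈ univ.filter (fun A : Finset α => u ∉ A ∧ v ∈ A),
        (f (insert u A) - f A) * ((∏ w ∈ A.erase v, x w) * ∏ w ∈ Aᶜ.erase u, (1 - x w))
      = ∑ A ∈ univ.filter (fun A : Finset α => u ∉ A ∧ v ∉ A),
        (f (insert u (insert v A)) - f (insert v A))
          * ((∏ w ∈ A, x w) * ∏ w ∈ (Aᶜ.erase u).erase v, (1 - x w)) := by
    refine Finset.sum_nbij' (fun A => A.erase v) (fun A => insert v A) ?_ ?_ ?_ ?_ ?_
    · intro A hA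
      obtain ⟨-, hu, hv⟩ := Finset.mem_filter.mp hA
      simp only [Finset.mem_filter, Finset.mem_univ, true_and]
      exact ⟨fun h => hu (Finset.mem_of_mem_erase h), Finset.notMem_erase v A⟩
    · intro A hA
      obtain ⟨-, hu, hv⟩ := Finset.mem_filter.mp hA
      simp only [Finset.mem_filter, Finset.mem_univ, true_and]
      exact ⟨fun h => (Finset.mem_insert.mp h).elim (fun h' => huv h') hu,
        Finset.mem_insert_self v A⟩
    · intro A hA
      obtain ⟨-, hu, hv⟩ := Finset.mem_filter.mp hA
      exact Finset.insert_erase hv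
    · intro A hA
      obtain ⟨-, hu, hv⟩ := Finset.mem_filter.mp hA
      exact Finset.erase_insert hv
    · intro A hA
      obtain ⟨-, hu, hv⟩ := Finset.mem_filter.mp hA
      have hnv : v ∉ Aᶜ := fun h => Finset.mem_compl.mp h hv
      rw [Finset.insert_erase hv, Finset.compl_erase, Finset.erase_right_comm,
        Finset.erase_insert hnv]
  rw [e2]
  refine Finset.sum_le_sum fun A hA => ?_
  obtain ⟨-, hu, hv⟩ := Finset.mem_filter.mp hA
  have hw : 0 ≤ (∏ w ∈ A, x w) * ∏ w ∈ (Aᶜ.erase u).erase v, (1 - x w) := by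
    apply mul_nonneg
    · exact Finset.prod_nonneg fun w _ => (hx w).1
    · exact Finset.prod_nonneg fun w _ => by linarith [(hx w).2]
  have hmono : f (insert u (insert v A)) - f (insert v A) ≤ f (insert u A) - f A := by
    have := hsub A (insert v A) (Finset.subset_insert v A) u
      (by simp [Finset.mem_insert, huv, hu])
    linarith
  exact mul_le_mul_of_nonneg_right hmono hw

lemma mder_anti (f : Finset α → ℝ) (hsub : Submodular f) (x z : α → ℝ)
    (hxz : ∀ w, x w ≤ z w) (hx : ∀ w, 0 ≤ x w ∧ x w ≤ 1) (hz : ∀ w, 0 ≤ z w ∧ z w ≤ 1)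
    (u : α) : mder f z u ≤ mder f x u := by
  have main : ∀ S : Finset α,
      mder f (fun w => if w ∈ S then z w else x w) u ≤ mder f x u := by
    intro S
    induction S using Finset.induction_on with
    | empty => simp
    | insert v S hvS ih =>
      set h : α → ℝ := fun w => if w ∈ S then z w else x w with hh
      have hrange : ∀ w, 0 ≤ h w ∧ h w ≤ 1 := fun w => by
        by_cases hw : w ∈ S <;> simp [hh, hw, hx w, hz w]
      have hins : (fun w => if w ∈ insert v S then z w else x w)
          = Function.update h v (z v) := by
        funext w
        by_cases hw : w = v
        · subst hw; simp [hh, Function.update_self]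
        · rw [Function.update_of_ne hw]
          simp [hh, Finset.mem_insert, hw]
      rw [hins]
      by_cases hvu : v = u
      · subst hvu; rw [mder_update_u]; exact ih
      · have huv : u ≠ v := fun h' => hvu h'.symm
        have hc1 : mder f (Function.update h v (z v)) u
            = (1 - z v) * mder f (Function.update h v 0) u
              + z v * mder f (Function.update h v 1) u := by
          rw [mder_cond f _ huv, Function.update_self, Function.update_idem,
            Function.update_idem]
        have hc2 : mder f h u
            = (1 - h v) * mder f (Function.update h v 0) u
              + h v * mder f (Function.update h v 1) u := mder_cond f h huv
        have hstep : mder f (Function.update h v 1) u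
            ≤ mder f (Function.update h v 0) u := anti_step f hsub h hrange huv
        have hhv : h v = x v := by simp [hh, hvS]
        have hle : x v ≤ z v := hxz v
        have h0 : 0 ≤ x v := (hx v).1
        nlinarith [ih, hc2, hc1, hstep, hle, h0]
  have hz' : z = fun w => if w ∈ (univ : Finset α) then z w else x w := by
    funext w; simp
  rw [hz']
  exact main univ


lemma ml_nonneg (f : Finset α → ℝ) (hf0 : ∀ A : Finset α, 0 ≤ f A) (x : α → ℝ)
    (hx : ∀ w, 0 ≤ x w ∧ x w ≤ 1) : 0 ≤ multilinear f x := by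
  refine Finset.sum_nonneg fun A _ => mul_nonneg (hf0 A) (mul_nonneg ?_ ?_)
  · exact Finset.prod_nonneg fun w _ => (hx w).1
  · exact Finset.prod_nonneg fun w _ => by linarith [(hx w).2]

lemma key (f : Finset α → ℝ) (hf0 : ∀ A : Finset α, 0 ≤ f A) (hsub : Submodular f)
    (p : ℝ) (hp0 : 0 < p) (hp1 : p ≤ 1) :
    ∀ S : Finset α, ∀ x y : α → ℝ, (∀ u, 0 ≤ x u ∧ x u ≤ 1) → (∀ u, 0 ≤ y u ∧ y u ≤ p) →
    (∀ u, 0 < x u → ¬ 0 < y u) → (∀ u, u ∉ S → y u = 0) →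
    (1 - p) * multilinear f x + p * multilinear f (fun v => x v + y v / p)
      ≤ multilinear f (fun v => x v + y v) := by
  intro S
  induction S using Finset.induction_on with
  | empty =>
    intro x y hx hy hd hS
    have hy0 : ∀ v, y v = 0 := fun v => hS v (Finset.notMem_empty v)
    have e : (fun v => x v + y v) = x := funext fun v => by rw [hy0]; ring
    have e2 : (fun v => x v + y v / p) = x := funext fun v => by rw [hy0]; simp
    rw [e, e2]; linarith
  | insert u S huS ih =>
    intro x y hx hy hd hS
    by_cases hyu : y u = 0
    · exact ih x y hx hy hd fun v hv => by
        by_cases hvu : v = u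
        · exact hvu ▸ hyu
        · exact hS v (fun h => hv ((Finset.mem_insert.mp h).resolve_left hvu))
    · have hq0 : 0 < y u := lt_of_le_of_ne (hy u).1 (Ne.symm hyu)
      have hxu : x u = 0 := by
        rcases (hx u).1.eq_or_lt with h | h
        · exact h.symm
        · exact absurd hq0 (hd u h)
      set y' : α → ℝ := Function.update y u 0 with hy'def
      have hy'u : y' u = 0 := Function.update_self u 0 y
      have hy'v : ∀ v, v ≠ u → y' v = y v := fun v hv => Function.update_of_ne hv 0 y
      have hy'b : ∀ v, 0 ≤ y' v ∧ y' v ≤ p := by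
        intro v
        by_cases hv : v = u
        · subst hv; rw [hy'u]; exact ⟨le_refl 0, le_of_lt hp0⟩
        · rw [hy'v v hv]; exact hy v
      have hS' : ∀ v, v ∉ S → y' v = 0 := by
        intro v hv
        by_cases hvu : v = u
        · subst hvu; exact hy'u
        · rw [hy'v v hvu]
          exact hS v (fun h => hv ((Finset.mem_insert.mp h).resolve_left hvu))
      have hd1 : ∀ v, 0 < x v → ¬ 0 < y' v := by
        intro v hv
        by_cases hvu : v = u
        · subst hvu; rw [hy'u]; exact lt_irrefl 0
        · rw [hy'v v hvu]; exact hd v hv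
      have hx1 : ∀ v, 0 ≤ Function.update x u 1 v ∧ Function.update x u 1 v ≤ 1 := by
        intro v
        by_cases hvu : v = u
        · subst hvu; rw [Function.update_self]; exact ⟨zero_le_one, le_refl 1⟩
        · rw [Function.update_of_ne hvu]; exact hx v
      have hd2 : ∀ v, 0 < Function.update x u 1 v → ¬ 0 < y' v := by
        intro v hv
        by_cases hvu : v = u
        · subst hvu; rw [hy'u]; exact lt_irrefl 0
        · rw [hy'v v hvu]; exact hd v (by rwa [Function.update_of_ne hvu] at hv)
      have IH1 := ih x y' hx hy'b hd1 hS'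
      have IH2 := ih (Function.update x u 1) y' hx1 hy'b hd2 hS'
      -- conditioning identities
      have hz0 : Function.update (fun v => x v + y v) u 0 = fun v => x v + y' v := by
        funext v
        by_cases hvu : v = u
        · subst hvu; rw [Function.update_self, hy'u, hxu]; ring
        · rw [Function.update_of_ne hvu, hy'v v hvu]
      have hz1 : Function.update (fun v => x v + y v) u 1
          = fun v => Function.update x u 1 v + y' v := by
        funext v
        by_cases hvu : v = u
        · subst hvu; rw [Function.update_self, Function.update_self, hy'u]; ring
        · rw [Function.update_of_ne hvu, Function.update_of_ne hvu, hy'v v hvu]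
      have hw0 : Function.update (fun v => x v + y v / p) u 0
          = fun v => x v + y' v / p := by
        funext v
        by_cases hvu : v = u
        · subst hvu; rw [Function.update_self, hy'u, hxu]; ring
        · rw [Function.update_of_ne hvu, hy'v v hvu]
      have hw1 : Function.update (fun v => x v + y v / p) u 1
          = fun v => Function.update x u 1 v + y' v / p := by
        funext v
        by_cases hvu : v = u
        · subst hvu; rw [Function.update_self, Function.update_self, hy'u]; ring
        · rw [Function.update_of_ne hvu, Function.update_of_ne hvu, hy'v v hvu]
      have cond1 : multilinear f (fun v => x v + y v)
          = (1 - y u) * multilinear f (fun v => x v + y' v)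
            + y u * multilinear f (fun v => Function.update x u 1 v + y' v) := by
        have h := ml_cond f (fun v => x v + y v) u
        rw [hz0, hz1] at h
        simpa [hxu] using h
      have cond2 : multilinear f (fun v => x v + y v / p)
          = (1 - y u / p) * multilinear f (fun v => x v + y' v / p)
            + y u / p * multilinear f (fun v => Function.update x u 1 v + y' v / p) := by
        have h := ml_cond f (fun v => x v + y v / p) u
        rw [hw0, hw1] at h
        simpa [hxu] using h
      -- monotone marginals
      have hg : ∀ v, 0 ≤ x v + y' v / p ∧ x v + y' v / p ≤ 1 := by
        intro v
        have h0 : 0 ≤ y' v / p := div_nonneg (hy'b v).1 (le_of_lt hp0)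
        constructor
        · linarith [(hx v).1]
        · rcases (hy'b v).1.eq_or_lt with h | h
          · rw [← h]; simpa using (hx v).2
          · have hxv : x v = 0 := by
              rcases (hx v).1.eq_or_lt with h' | h'
              · exact h'.symm
              · by_cases hvu : v = u
                · subst hvu; exact hxu
                · exact absurd (by rwa [hy'v v hvu] at h) (hd v h')
            rw [hxv, zero_add, div_le_one hp0]
            exact (hy'b v).2
      have hmix1 : multilinear f (Function.update x u 1) - multilinear f x = mder f x u := by
        have h := mix_eq f x u
        have e : Function.update x u 0 = x := Function.update_eq_self_iff.mpr hxu.symm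
        rwa [e] at h
      have hmix2 : multilinear f (fun v => Function.update x u 1 v + y' v / p)
          - multilinear f (fun v => x v + y' v / p)
          = mder f (fun v => x v + y' v / p) u := by
        have h := mix_eq f (fun v => x v + y' v / p) u
        have e0 : Function.update (fun v => x v + y' v / p) u 0
            = fun v => x v + y' v / p := by
          apply Function.update_eq_self_iff.mpr
          simp [hxu, hy'u]
          
        have e1 : Function.update (fun v => x v + y' v / p) u 1
            = fun v => Function.update x u 1 v + y' v / p := by
          funext v
          by_cases hvu : v = u
          · subst hvu; rw [Function.update_self, Function.update_self, hy'u]; simp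
          · rw [Function.update_of_ne hvu, Function.update_of_ne hvu]
        rwa [e0, e1] at h
      have hanti : mder f (fun v => x v + y' v / p) u ≤ mder f x u := by
        refine mder_anti f hsub x _ (fun v => ?_) hx hg u
        have h0 : 0 ≤ y' v / p := div_nonneg (hy'b v).1 (le_of_lt hp0)
        linarith
      -- arithmetic finish
      rw [cond1, cond2]
      have hpd : p * ((1 - y u / p) * multilinear f (fun v => x v + y' v / p)
            + y u / p * multilinear f (fun v => Function.update x u 1 v + y' v / p))
          = (p - y u) * multilinear f (fun v => x v + y' v / p)
            + y u * multilinear f (fun v => Function.update x u 1 v + y' v / p) := by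
        field_simp
      rw [hpd]
      have hqp : y u ≤ p := (hy u).2
      have h1 : (1 - y u) * ((1 - p) * multilinear f x
            + p * multilinear f (fun v => x v + y' v / p))
          ≤ (1 - y u) * multilinear f (fun v => x v + y' v) :=
        mul_le_mul_of_nonneg_left IH1 (by linarith)
      have h2 : y u * ((1 - p) * multilinear f (Function.update x u 1)
            + p * multilinear f (fun v => Function.update x u 1 v + y' v / p))
          ≤ y u * multilinear f (fun v => Function.update x u 1 v + y' v) :=
        mul_le_mul_of_nonneg_left IH2 (le_of_lt hq0)
      have h3 : 0 ≤ y u * (1 - p) * ((multilinear f (Function.update x u 1) - multilinear f x)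
            - (multilinear f (fun v => Function.update x u 1 v + y' v / p)
              - multilinear f (fun v => x v + y' v / p))) := by
        apply mul_nonneg (mul_nonneg (le_of_lt hq0) (by linarith))
        rw [hmix1, hmix2]
        linarith
      nlinarith [h1, h2, h3]

end Stmt1Aux

open Stmt1Aux in
/-- If `f` is non-negative and submodular with multilinear extension `F`,
`p ∈ [0,1]`, and `x, y ∈ [0,1]^N` have disjoint supports with `y_u ≤ p` for every `u`,
then `F(x + y) ≥ (1 − p)·F(x)`. -/
theorem stmt_1 {α : Type*} [Fintype α] [DecidableEq α] (f : Finset α → ℝ)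
    (hf0 : ∀ A : Finset α, 0 ≤ f A) (hsub : Submodular f)
    (p : ℝ) (hp : p ∈ Set.Icc (0 : ℝ) 1)
    (x y : α → ℝ) (hx : ∀ u, x u ∈ Set.Icc (0 : ℝ) 1) (hy : ∀ u, y u ∈ Set.Icc (0 : ℝ) 1)
    (hsupp : ∀ u, 0 < x u → ¬ 0 < y u)
    (hyp : ∀ u, y u ≤ p) :
    (1 - p) * multilinear f x ≤ multilinear f (x + y) := by
  obtain ⟨hp0, hp1⟩ := hp
  have hxy : (x + y) = fun v => x v + y v := rfl
  rcases hp0.eq_or_lt with h0 | h0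
  · have hy0 : ∀ v, y v = 0 := fun v => le_antisymm (h0 ▸ hyp v) (hy v).1
    have e : (fun v => x v + y v) = x := funext fun v => by rw [hy0]; ring
    rw [hxy, e, ← h0]
    linarith
  · have hkey := key f hf0 hsub p h0 hp1 Finset.univ x y
      (fun u => ⟨(hx u).1, (hx u).2⟩)
      (fun u => ⟨(hy u).1, hyp u⟩) hsupp
      (fun u hu => absurd (Finset.mem_univ u) hu)
    have hnn : 0 ≤ multilinear f (fun v => x v + y v / p) := by
      refine ml_nonneg f hf0 _ (fun v => ?_)
      have h0' : 0 ≤ y v / p := div_nonneg (hy v).1 (le_of_lt h0)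
      constructor
      · linarith [(hx v).1]
      · rcases (hy v).1.eq_or_lt with h | h
        · rw [← h]; simpa using (hx v).2
        · have hxv : x v = 0 := by
            rcases (hx v).1.eq_or_lt with h' | h'
            · exact h'.symm
            · exact absurd h (hsupp v h')
          rw [hxv, zero_add, div_le_one h0]
          exact hyp v
    rw [hxy]
    nlinarith [hkey, hnn, h0]
end

section
/- Let f : 2^N → ℝ be a submodular function on a finite ground set N, let F be its multilinear extension and f̂ its Lovász extension. Then F(x) ≥ f̂(x) for every vector x ∈ [0,1]^N. -/
open Finset

/-- The Lovász extension `f̂` of a set function `f`: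
`f̂(x) = ∫_0^1 f(T_λ(x)) dλ` where `T_λ(x) = {u : x_u ≥ λ}`. -/
noncomputable def lovasz {α : Type*} [Fintype α] [DecidableEq α]
    (f : Finset α → ℝ) (x : α → ℝ) : ℝ :=
  ∫ l in (0 : ℝ)..1, f (Finset.univ.filter fun u => l ≤ x u)

section Aux

open MeasureTheory

variable {α : Type*} [DecidableEq α]

private lemma measurable_step (x : α → ℝ) (s : Finset α) :
    ∀ f : Finset α → ℝ, Measurable fun l : ℝ => f (s.filter fun u => l ≤ x u) := by
  induction s using Finset.induction_on with
  | empty => intro f; simp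
  | @insert v t hv ih =>
      intro f
      have : (fun l : ℝ => f ((insert v t).filter fun u => l ≤ x u)) =
          (Set.Iic (x v)).piecewise
            (fun l => (fun A => f (insert v A)) (t.filter fun u => l ≤ x u))
            (fun l => f (t.filter fun u => l ≤ x u)) := by
        funext l
        by_cases h : l ≤ x v <;>
          simp [Finset.filter_insert, h, Set.piecewise, Set.mem_Iic]
      rw [this]
      exact Measurable.piecewise measurableSet_Iic (ih fun A => f (insert v A)) (ih f)

private lemma intInt (x : α → ℝ) (s : Finset α) [Fintype α] (f : Finset α → ℝ) (a b : ℝ) :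
    IntervalIntegrable (fun l : ℝ => f (s.filter fun u => l ≤ x u)) volume a b := by
  set C : ℝ := ∑ A : Finset α, |f A| with hC
  rw [intervalIntegrable_iff]
  apply MeasureTheory.Integrable.mono' (g := fun _ => C)
  · exact integrableOn_const measure_Ioc_lt_top.ne
  · exact ((measurable_step x s f).aestronglyMeasurable).restrict
  · refine Filter.Eventually.of_forall fun l => ?_
    exact Finset.single_le_sum (f := fun A => |f A|) (fun A _ => abs_nonneg _) (mem_univ _)

/-- restricted Lovász extension -/
private noncomputable def Lres (f : Finset α → ℝ) (x : α → ℝ) (s : Finset α) : ℝ :=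
  ∫ l in (0 : ℝ)..1, f (s.filter fun u => l ≤ x u)

/-- restricted multilinear extension -/
private noncomputable def Mres (f : Finset α → ℝ) (x : α → ℝ) (s : Finset α) : ℝ :=
  ∑ A ∈ s.powerset, f A * ((∏ u ∈ A, x u) * ∏ u ∈ s \ A, (1 - x u))

private lemma sum_weights (x : α → ℝ) (t : Finset α) :
    ∑ A ∈ t.powerset, (∏ u ∈ A, x u) * ∏ u ∈ t \ A, (1 - x u) = 1 := by
  have := Finset.prod_add (f := x) (g := fun u => 1 - x u) t
  simp at this
  rw [← this]

omit [DecidableEq α] in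
private lemma weights_nonneg (x : α → ℝ) (hx : ∀ u, x u ∈ Set.Icc (0:ℝ) 1) (A B : Finset α) :
    0 ≤ (∏ u ∈ A, x u) * ∏ u ∈ B, (1 - x u) := by
  apply mul_nonneg
  · exact Finset.prod_nonneg fun u _ => (hx u).1
  · exact Finset.prod_nonneg fun u _ => by linarith [(hx u).2]

/-- Recursion for the restricted multilinear extension, conditioning on `u`. -/
private lemma Mres_rec (f : Finset α → ℝ) (x : α → ℝ) {s : Finset α} {u : α} (hu : u ∈ s) :
    Mres f x s = x u * Mres (fun A => f (insert u A)) x (s.erase u)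
      + (1 - x u) * Mres f x (s.erase u) := by
  set t := s.erase u with ht
  have hut : u ∉ t := Finset.notMem_erase u s
  have hs : s = insert u t := by rw [ht, Finset.insert_erase hu]
  rw [hs, Mres, Finset.sum_powerset_insert hut]
  rw [Mres, Mres, Finset.mul_sum, Finset.mul_sum, add_comm]
  congr 1
  · apply Finset.sum_congr rfl
    intro A hA
    have hA' : A ⊆ t := Finset.mem_powerset.1 hA
    have huA : u ∉ A := fun h => hut (hA' h)
    have h1 : insert u t \ insert u A = t \ A := by
      rw [Finset.insert_sdiff_insert]
      exact Finset.sdiff_insert_of_notMem hut A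
    rw [h1, Finset.prod_insert huA]
    ring
  · apply Finset.sum_congr rfl
    intro A hA
    have hA' : A ⊆ t := Finset.mem_powerset.1 hA
    have huA : u ∉ A := fun h => hut (hA' h)
    have h1 : insert u t \ A = insert u (t \ A) := by
      rw [Finset.insert_sdiff_of_notMem _ huA]
    have huTA : u ∉ t \ A := fun h => hut (Finset.mem_sdiff.1 h).1
    rw [h1, Finset.prod_insert huTA]
    ring

/-- Recursion for the restricted Lovász extension, peeling the maximal element. -/
private lemma Lres_rec [Fintype α] (f : Finset α → ℝ) (x : α → ℝ) {s : Finset α} {u : α}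
    (hu : u ∈ s) (hmax : ∀ v ∈ s, x v ≤ x u) (h0 : 0 ≤ x u) (h1 : x u ≤ 1) :
    Lres f x s = Lres (fun A => f (insert u A)) x (s.erase u)
      + (1 - x u) * (f ∅ - f {u}) := by
  set t := s.erase u with ht
  set g : Finset α → ℝ := fun A => f (insert u A) with hg
  have hsplitF : Lres f x s = (∫ l in (0:ℝ)..(x u), f (s.filter fun v => l ≤ x v))
      + ∫ l in (x u)..1, f (s.filter fun v => l ≤ x v) :=
    (intervalIntegral.integral_add_adjacent_intervals (intInt x s f 0 (x u))
      (intInt x s f (x u) 1)).symm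
  have hsplitG : Lres g x t = (∫ l in (0:ℝ)..(x u), g (t.filter fun v => l ≤ x v))
      + ∫ l in (x u)..1, g (t.filter fun v => l ≤ x v) :=
    (intervalIntegral.integral_add_adjacent_intervals (intInt x t g 0 (x u))
      (intInt x t g (x u) 1)).symm
  -- on [0, x u] the two integrands agree
  have heq1 : (∫ l in (0:ℝ)..(x u), f (s.filter fun v => l ≤ x v))
      = ∫ l in (0:ℝ)..(x u), g (t.filter fun v => l ≤ x v) := by
    apply intervalIntegral.integral_congr
    intro l hl
    rw [Set.uIcc_of_le h0] at hl
    have hlu : l ≤ x u := hl.2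
    have : s.filter (fun v => l ≤ x v) = insert u (t.filter fun v => l ≤ x v) := by
      have hs : s = insert u t := (Finset.insert_erase hu).symm
      rw [hs, Finset.filter_insert, if_pos hlu]
    simp only [this, hg]
  -- on (x u, 1] : f (s.filter ...) = f ∅
  have heq2 : (∫ l in (x u)..1, f (s.filter fun v => l ≤ x v))
      = (1 - x u) * f ∅ := by
    rw [intervalIntegral.integral_congr_ae (g := fun _ => f ∅) ?_,
      intervalIntegral.integral_const, smul_eq_mul]
    refine Filter.Eventually.of_forall fun l hl => ?_
    rw [Set.uIoc_of_le h1] at hl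
    have : s.filter (fun v => l ≤ x v) = ∅ := by
      apply Finset.filter_false_of_mem
      intro v hv
      have := hmax v hv
      push_neg
      linarith [hl.1]
    simp only [this]
  -- on (x u, 1] : g (t.filter ...) = g ∅ = f {u}
  have heq3 : (∫ l in (x u)..1, g (t.filter fun v => l ≤ x v))
      = (1 - x u) * f {u} := by
    rw [intervalIntegral.integral_congr_ae (g := fun _ => f {u}) ?_,
      intervalIntegral.integral_const, smul_eq_mul]
    refine Filter.Eventually.of_forall fun l hl => ?_
    rw [Set.uIoc_of_le h1] at hl
    have h : t.filter (fun v => l ≤ x v) = ∅ := by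
      apply Finset.filter_false_of_mem
      intro v hv
      have := hmax v (Finset.mem_of_mem_erase hv)
      push_neg
      linarith [hl.1]
    simp only [hg, h]
    norm_num
  rw [hsplitF, heq1, heq2, hsplitG, heq3]
  ring

private lemma submodular_insert {f : Finset α → ℝ} (hf : Submodular f) (u : α) :
    Submodular fun A => f (insert u A) := by
  intro A B hAB v hv
  by_cases hvu : v = u
  · subst hvu
    simp [Finset.insert_idem]
  · have h1 : insert v (insert u A) = insert u (insert v A) := Finset.insert_comm v u A
    have h2 : insert v (insert u B) = insert u (insert v B) := Finset.insert_comm v u B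
    simp only [← h1, ← h2]
    exact hf (insert u A) (insert u B) (Finset.insert_subset_insert u hAB) v
      (by simp [hv, hvu])

/-- marginal bound: `Mres g − Mres f ≤ f {u} − f ∅`, by submodularity the marginal of `u`
is maximized at `∅`, and the multilinear weights form a convex combination. -/
private lemma marginal_bound {f : Finset α → ℝ} (hf : Submodular f) (x : α → ℝ)
    (hx : ∀ u, x u ∈ Set.Icc (0:ℝ) 1) {t : Finset α} {u : α} (hut : u ∉ t) :
    Mres (fun A => f (insert u A)) x t - Mres f x t ≤ f {u} - f ∅ := by
  rw [Mres, Mres, ← Finset.sum_sub_distrib]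
  have : ∑ A ∈ t.powerset, (f (insert u A) * ((∏ v ∈ A, x v) * ∏ v ∈ t \ A, (1 - x v))
      - f A * ((∏ v ∈ A, x v) * ∏ v ∈ t \ A, (1 - x v)))
      = ∑ A ∈ t.powerset, (f (insert u A) - f A) * ((∏ v ∈ A, x v) * ∏ v ∈ t \ A, (1 - x v)) := by
    apply Finset.sum_congr rfl; intro A hA; ring
  rw [this]
  calc ∑ A ∈ t.powerset, (f (insert u A) - f A) * ((∏ v ∈ A, x v) * ∏ v ∈ t \ A, (1 - x v))
      ≤ ∑ A ∈ t.powerset, (f {u} - f ∅) * ((∏ v ∈ A, x v) * ∏ v ∈ t \ A, (1 - x v)) := by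
        apply Finset.sum_le_sum
        intro A hA
        apply mul_le_mul_of_nonneg_right _ (weights_nonneg x hx A (t \ A))
        have huA : u ∉ A := fun h => hut (Finset.mem_powerset.1 hA h)
        have := hf ∅ A (Finset.empty_subset A) u huA
        simpa using this
    _ = f {u} - f ∅ := by rw [← Finset.mul_sum, sum_weights, mul_one]

/-- Main induction: the restricted Lovász extension is at most the restricted
multilinear extension, by peeling off a maximal-coordinate element. -/
private lemma key [Fintype α] (x : α → ℝ) (hx : ∀ u, x u ∈ Set.Icc (0:ℝ) 1) :
    ∀ n (s : Finset α), s.card = n → ∀ f : Finset α → ℝ, Submodular f →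
      Lres f x s ≤ Mres f x s := by
  intro n
  induction n with
  | zero =>
      intro s hs f hf
      rw [Finset.card_eq_zero.1 hs]
      simp [Lres, Mres]
  | succ n ih =>
      intro s hs f hf
      have hne : s.Nonempty := Finset.card_pos.1 (by omega)
      obtain ⟨u, hu, hmax⟩ := Finset.exists_max_image s x hne
      set t := s.erase u with htdef
      have hct : t.card = n := by rw [htdef, Finset.card_erase_of_mem hu, hs]; omega
      have hut : u ∉ t := Finset.notMem_erase u s
      set g : Finset α → ℝ := fun A => f (insert u A) with hgdef
      have hg : Submodular g := submodular_insert hf u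
      have h0 : 0 ≤ x u := (hx u).1
      have h1 : x u ≤ 1 := (hx u).2
      have hL : Lres f x s = Lres g x t + (1 - x u) * (f ∅ - f {u}) :=
        Lres_rec f x hu hmax h0 h1
      have hM : Mres f x s = x u * Mres g x t + (1 - x u) * Mres f x t :=
        Mres_rec f x hu
      have hIH : Lres g x t ≤ Mres g x t := ih t hct g hg
      have hmb : Mres g x t - Mres f x t ≤ f {u} - f ∅ := marginal_bound hf x hx hut
      rw [hL, hM]
      nlinarith [hIH, hmb, h0, h1]

end Aux

/-- For a submodular `f` with multilinear extension `F` and Lovász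
extension `f̂`, it holds that `F(x) ≥ f̂(x)` for every `x ∈ [0,1]^N`. -/
theorem stmt_2 {α : Type*} [Fintype α] [DecidableEq α] (f : Finset α → ℝ)
    (hsub : Submodular f)
    (x : α → ℝ) (hx : ∀ u, x u ∈ Set.Icc (0 : ℝ) 1) :
    lovasz f x ≤ multilinear f x := by
  have h1 : lovasz f x = Lres f x Finset.univ := rfl
  have h2 : multilinear f x = Mres f x Finset.univ := by
    rw [multilinear, Mres, Finset.powerset_univ]
    apply Finset.sum_congr rfl
    intro A _
    rw [Finset.compl_eq_univ_sdiff]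
  rw [h1, h2]
  exact key x hx Finset.univ.card Finset.univ rfl f hsub
end

section
/- Let f : 2^N → ℝ be a non-negative submodular function on a finite ground set N with multilinear extension F, let c, τ ≥ 0 be reals and k > 0 a real. Let u_1, u_2, …, u_ℓ be distinct elements of N and let x̂ ∈ [0,1]^N be a vector whose support is {u_1, …, u_ℓ} and which satisfies ‖x̂‖₁ = k. If for every 1 ≤ i ≤ ℓ it holds that ∂_{u_i}F(x̂ ∧ 1_{{u_1,…,u_{i−1}}}) ≥ cτ/k, then F(x̂) ≥ cτ. -/
/-! The multilinear extension is affine in each coordinate, so raising coordinate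
`u_i` from `0` to `x̂_{u_i}` adds exactly `x̂_{u_i} · ∂_{u_i}F` at the current point. Adding the
support elements one at a time telescopes to
`F(x̂) = f(∅) + ∑_i x̂_{u_i} ∂_{u_i}F(x̂ ∧ 1_{{u_1,…,u_{i−1}}}) ≥ 0 + ‖x̂‖₁ · cτ/k = cτ`. -/

open Finset

/-- The partial derivative `∂_u F(x) = F(x ∨ 1_u) − F(x ∧ 1_{N∖{u}})` of the multilinear
extension of `f`, where `∨`/`∧` are the coordinate-wise max/min of vectors. -/
noncomputable def mlDeriv {α : Type*} [Fintype α] [DecidableEq α]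
    (f : Finset α → ℝ) (u : α) (x : α → ℝ) : ℝ :=
  multilinear f (fun v => max (x v) (if v = u then 1 else 0))
    - multilinear f (fun v => min (x v) (if v = u then 0 else 1))

section Multilinear

variable {α : Type*} [Fintype α] [DecidableEq α]

theorem prod_update_mul_prod_compl_update_eq (A : Finset α) (x : α → ℝ) (w : α) (t : ℝ) :
    (∏ v ∈ A, Function.update x w t v) * ∏ v ∈ Aᶜ, (1 - Function.update x w t v) =
      if w ∈ A then t * ((∏ v ∈ A \ {w}, x v) * ∏ v ∈ Aᶜ, (1 - x v))
      else (1 - t) * ((∏ v ∈ A, x v) * ∏ v ∈ Aᶜ \ {w}, (1 - x v)) := by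
  have hcompl : (fun v => 1 - Function.update x w t v) =
      Function.update (fun v => 1 - x v) w (1 - t) :=
    funext (Function.apply_update (fun _ y => 1 - y) x w t)
  rw [hcompl]
  split_ifs with hw
  · rw [prod_update_of_mem hw,
      prod_update_of_notMem (notMem_compl.mpr hw)]
    ring
  · rw [prod_update_of_notMem hw,
      prod_update_of_mem (mem_compl.mpr hw)]
    ring

theorem multilinear_update (f : Finset α → ℝ) (x : α → ℝ) (w : α) (t : ℝ) :
    multilinear f (Function.update x w t) =
      multilinear f (Function.update x w 0)
        + t * (multilinear f (Function.update x w 1) - multilinear f (Function.update x w 0)) := by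
  simp only [multilinear, ← sum_sub_distrib, mul_sum, ← sum_add_distrib]
  refine sum_congr rfl fun A _ => ?_
  simp only [prod_update_mul_prod_compl_update_eq]
  split_ifs <;> ring

theorem multilinear_zero (f : Finset α → ℝ) : multilinear f 0 = f ∅ := by
  rw [multilinear, sum_eq_single ∅]
  · simp
  · intro A _ hA
    simp [hA]
  · simp

theorem mlDeriv_eq_sub (f : Finset α → ℝ) (w : α) {z : α → ℝ}
    (hz : ∀ v, z v ∈ Set.Icc (0 : ℝ) 1) :
    mlDeriv f w z =
      multilinear f (Function.update z w 1) - multilinear f (Function.update z w 0) := by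
  unfold mlDeriv
  congr 2 <;> funext v <;> rcases eq_or_ne v w with rfl | hv
  · simp [(hz v).2]
  · simp [hv, (hz v).1]
  · simp [(hz v).1]
  · simp [hv, (hz v).2]

theorem multilinear_restrict_insert (f : Finset α → ℝ) {x : α → ℝ}
    (hx : ∀ v, x v ∈ Set.Icc (0 : ℝ) 1) {s : Finset α} {w : α} (hw : w ∉ s) :
    multilinear f (fun v => if v ∈ insert w s then x v else 0) =
      multilinear f (fun v => if v ∈ s then x v else 0)
        + x w * mlDeriv f w (fun v => if v ∈ s then x v else 0) := by
  set z : α → ℝ := fun v => if v ∈ s then x v else 0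
  have hz : ∀ v, z v ∈ Set.Icc (0 : ℝ) 1 := fun v => by
    by_cases hv : v ∈ s <;> simp [z, hv, hx v]
  have hinsert : (fun v => if v ∈ insert w s then x v else 0) = Function.update z w (x w) := by
    funext v
    rcases eq_or_ne v w with rfl | hvw <;> simp [z, *]
  have hzw : Function.update z w 0 = z := by
    rw [Function.update_eq_self_iff]
    simp [z, hw]
  rw [hinsert, multilinear_update, mlDeriv_eq_sub f w hz, hzw]

omit [Fintype α] in
theorem image_filter_lt_castSucc {ℓ : ℕ} (u : Fin (ℓ + 1) → α) (i : Fin ℓ) :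
    (univ.filter (· < i.castSucc)).image u = (univ.filter (· < i)).image (u ∘ Fin.castSucc) := by
  ext v
  simp [Fin.exists_fin_succ', (Fin.castSucc_lt_last i).not_gt]

omit [Fintype α] in
theorem image_filter_lt_last {ℓ : ℕ} (u : Fin (ℓ + 1) → α) :
    (univ.filter (· < Fin.last ℓ)).image u = univ.image (u ∘ Fin.castSucc) := by
  ext v
  simp [Fin.exists_fin_succ', Fin.castSucc_lt_last]

omit [Fintype α] in
theorem image_univ_fin_succ {ℓ : ℕ} (u : Fin (ℓ + 1) → α) :
    univ.image u = insert (u (Fin.last ℓ)) (univ.image (u ∘ Fin.castSucc)) := by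
  ext v
  simp [Fin.exists_fin_succ', or_comm, eq_comm]

theorem multilinear_restrict_image_eq (f : Finset α → ℝ) {x : α → ℝ}
    (hx : ∀ v, x v ∈ Set.Icc (0 : ℝ) 1) {ℓ : ℕ} (u : Fin ℓ → α) (hu : Function.Injective u) :
    multilinear f (fun v => if v ∈ univ.image u then x v else 0) =
      f ∅ + ∑ i, x (u i) *
        mlDeriv f (u i) (fun v => if v ∈ (univ.filter (· < i)).image u then x v else 0) := by
  induction ℓ with
  | zero => simpa [Pi.zero_def] using multilinear_zero f
  | succ ℓ ih =>
    have hlast : u (Fin.last ℓ) ∉ univ.image (u ∘ Fin.castSucc) := by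
      simp [hu.eq_iff, Fin.castSucc_ne_last]
    rw [image_univ_fin_succ, multilinear_restrict_insert f hx hlast,
      ih (u ∘ Fin.castSucc) (hu.comp (Fin.castSucc_injective ℓ)), Fin.sum_univ_castSucc,
      image_filter_lt_last]
    simp only [image_filter_lt_castSucc, Function.comp_apply]
    ring

end Multilinear

theorem stmt_5_general {α : Type*} [Fintype α] [DecidableEq α] (f : Finset α → ℝ)
    (hf0 : ∀ A : Finset α, 0 ≤ f A)
    (c τ : ℝ) (k : ℝ) (hk : 0 < k)
    (ℓ : ℕ) (u : Fin ℓ → α) (hu : Function.Injective u)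
    (x : α → ℝ) (hx : ∀ v, x v ∈ Set.Icc (0 : ℝ) 1)
    (hsupp : ∀ v, 0 < x v ↔ v ∈ Finset.image u Finset.univ)
    (hnorm : ∑ v, x v = k)
    (hthresh : ∀ i : Fin ℓ,
      c * τ / k ≤ mlDeriv f (u i)
        (fun v => if v ∈ (Finset.univ.filter (fun j : Fin ℓ => j < i)).image u
          then x v else 0)) :
    c * τ ≤ multilinear f x := by
  have hzero : ∀ v ∉ univ.image u, x v = 0 := fun v hv =>
    le_antisymm (not_lt.mp (mt (hsupp v).mp hv)) (hx v).1
  have hrestrict : (fun v => if v ∈ univ.image u then x v else 0) = x := by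
    funext v
    split_ifs with hv
    · rfl
    · exact (hzero v hv).symm
  have hmass : ∑ i, x (u i) = k := by
    rw [← hnorm, ← sum_image fun i _ j _ h => hu h]
    exact sum_subset (subset_univ _) fun v _ hv => hzero v hv
  calc c * τ = ∑ i, x (u i) * (c * τ / k) := by
        rw [← sum_mul, hmass]
        field_simp
    _ ≤ f ∅ + ∑ i, x (u i) *
          mlDeriv f (u i) (fun v => if v ∈ (univ.filter (· < i)).image u then x v else 0) :=
        le_add_of_nonneg_of_le (hf0 ∅) <|
          sum_le_sum fun i _ => mul_le_mul_of_nonneg_left (hthresh i) (hx (u i)).1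
    _ = multilinear f x := by rw [← multilinear_restrict_image_eq f hx u hu, hrestrict]

/-- (cf. Lemma `Fx-exactlyK`) If `x̂ ∈ [0,1]^N` has support
`{u_1, …, u_ℓ}` (with the `u_i` distinct), `‖x̂‖₁ = k`, and
`∂_{u_i}F(x̂ ∧ 1_{{u_1,…,u_{i−1}}}) ≥ cτ/k` for every `i`, then `F(x̂) ≥ cτ`. -/
theorem stmt_5 {α : Type*} [Fintype α] [DecidableEq α] (f : Finset α → ℝ)
    (hf0 : ∀ A : Finset α, 0 ≤ f A) (hsub : Submodular f)
    (c τ : ℝ) (hc : 0 ≤ c) (hτ : 0 ≤ τ) (k : ℝ) (hk : 0 < k)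
    (ℓ : ℕ) (u : Fin ℓ → α) (hu : Function.Injective u)
    (x : α → ℝ) (hx : ∀ v, x v ∈ Set.Icc (0 : ℝ) 1)
    (hsupp : ∀ v, 0 < x v ↔ v ∈ Finset.image u Finset.univ)
    (hnorm : ∑ v, x v = k)
    (hthresh : ∀ i : Fin ℓ,
      c * τ / k ≤ mlDeriv f (u i)
        (fun v => if v ∈ (Finset.univ.filter (fun j : Fin ℓ => j < i)).image u
          then x v else 0)) :
    c * τ ≤ multilinear f x :=
  stmt_5_general f hf0 c τ k hk ℓ u hu x hx hsupp hnorm hthresh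
end

section
/- Let f : 2^N → ℝ be a non-negative submodular function on a finite ground set N with multilinear extension F, let p ∈ [0,1], and let S, O ⊆ N be arbitrary sets. Then F(p·1_S + 1_{O∖S}) ≥ (1 − p)·[p·f(O) + (1 − p)·f(O∖S)]. -/
open Finset

section Aux

variable {α : Type*} [DecidableEq α]

noncomputable def ext' (f : Finset α → ℝ) (p : ℝ) (C B : Finset α) : ℝ :=
  ∑ T ∈ C.powerset, p ^ T.card * (1 - p) ^ (C.card - T.card) * f (T ∪ B)

lemma ext'_empty (f : Finset α → ℝ) (p : ℝ) (B : Finset α) : ext' f p ∅ B = f B := by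
  simp [ext']

lemma ext'_insert (f : Finset α → ℝ) (p : ℝ) {u : α} {C : Finset α} (B : Finset α)
    (hu : u ∉ C) :
    ext' f p (insert u C) B = p * ext' f p C (insert u B) + (1 - p) * ext' f p C B := by
  have h0 : ext' f p (insert u C) B
      = (∑ T ∈ C.powerset, p ^ T.card * (1 - p) ^ ((insert u C).card - T.card) * f (T ∪ B))
        + ∑ T ∈ C.powerset, p ^ (insert u T).card
            * (1 - p) ^ ((insert u C).card - (insert u T).card) * f (insert u T ∪ B) := by
    unfold ext'
    exact Finset.sum_powerset_insert hu _
  have hA : (∑ T ∈ C.powerset,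
        p ^ T.card * (1 - p) ^ ((insert u C).card - T.card) * f (T ∪ B))
      = (1 - p) * ext' f p C B := by
    unfold ext'
    rw [Finset.mul_sum]
    apply Finset.sum_congr rfl; intro T hT
    have hc : T.card ≤ C.card := Finset.card_le_card (Finset.mem_powerset.mp hT)
    rw [Finset.card_insert_of_notMem hu]
    have hcc : C.card + 1 - T.card = (C.card - T.card) + 1 := by omega
    rw [hcc, pow_succ]; ring
  have hB : (∑ T ∈ C.powerset, p ^ (insert u T).card
        * (1 - p) ^ ((insert u C).card - (insert u T).card) * f (insert u T ∪ B))
      = p * ext' f p C (insert u B) := by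
    unfold ext'
    rw [Finset.mul_sum]
    apply Finset.sum_congr rfl; intro T hT
    have hT' : T ⊆ C := Finset.mem_powerset.mp hT
    have huT : u ∉ T := fun h => hu (hT' h)
    have hc : T.card ≤ C.card := Finset.card_le_card hT'
    rw [Finset.card_insert_of_notMem hu, Finset.card_insert_of_notMem huT,
      Finset.insert_union, ← Finset.union_insert]
    have hcc : C.card + 1 - (T.card + 1) = C.card - T.card := by omega
    rw [hcc]; ring
  rw [h0, hA, hB]; ring

lemma ext'_compose (f : Finset α → ℝ) (p : ℝ) (u : α) (C B : Finset α) :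
    ext' (fun A => f (insert u A)) p C B = ext' f p C (insert u B) := by
  apply Finset.sum_congr rfl; intro T _
  rw [Finset.union_insert]

lemma ext'_key {f : Finset α → ℝ} {p : ℝ} (hp0 : 0 ≤ p) (hp1 : p ≤ 1)
    (hsub : Submodular f) (C : Finset α) :
    ∀ B K : Finset α, Disjoint C B → K ⊆ C →
      p * ext' f p (C \ K) (K ∪ B) + (1 - p) * ext' f p (C \ K) B ≤ ext' f p C B := by
  induction C using Finset.induction_on with
  | empty =>
    intro B K _ hK
    have hKe : K = ∅ := Finset.subset_empty.mp hK
    subst hKe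
    simp only [Finset.sdiff_empty, Finset.sdiff_self, Finset.empty_union, ext'_empty]
    ring_nf
    rfl
  | @insert u C' hu ih =>
    intro B K hdisj hK
    have huB : u ∉ B := Finset.disjoint_left.mp hdisj (Finset.mem_insert_self u C')
    have hdisj' : Disjoint C' B := hdisj.mono_left (Finset.subset_insert u C')
    have hdisj'' : Disjoint C' (insert u B) := by
      rw [Finset.disjoint_insert_right]; exact ⟨hu, hdisj'⟩
    have h1p : (0:ℝ) ≤ 1 - p := by linarith
    by_cases huK : u ∈ K
    · set K' := K.erase u with hK'def
      have hK'sub : K' ⊆ C' := by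
        intro v hv
        have hvK := Finset.mem_of_mem_erase hv
        have hvne := Finset.ne_of_mem_erase hv
        exact (Finset.mem_insert.mp (hK hvK)).resolve_left hvne
      have huK' : u ∉ K' := Finset.notMem_erase u K
      have hinsK : insert u K' = K := Finset.insert_erase huK
      have hD : insert u C' \ K = C' \ K' := by
        ext v
        simp only [Finset.mem_sdiff, Finset.mem_insert, hK'def, Finset.mem_erase]
        constructor
        · rintro ⟨h1 | h1, h2⟩
          · exact absurd (h1 ▸ huK) h2
          · exact ⟨h1, fun h => h2 h.2⟩
        · rintro ⟨h1, h2⟩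
          exact ⟨Or.inr h1, fun h => h2 ⟨fun he => hu (he ▸ h1), h⟩⟩
      rw [ext'_insert f p B hu, hD]
      have IH1 := ih (insert u B) K' hdisj'' hK'sub
      have IH2 := ih B K' hdisj' hK'sub
      have e : K' ∪ insert u B = K ∪ B := by
        rw [Finset.union_insert, ← hinsK, Finset.insert_union]
      rw [e] at IH1
      have h4 : ext' f p (C' \ K') (K ∪ B) + ext' f p (C' \ K') B
          ≤ ext' f p (C' \ K') (insert u B) + ext' f p (C' \ K') (K' ∪ B) := by
        unfold ext'
        rw [← Finset.sum_add_distrib, ← Finset.sum_add_distrib]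
        apply Finset.sum_le_sum
        intro T hT
        have hT' : T ⊆ C' \ K' := Finset.mem_powerset.mp hT
        have huT : u ∉ T := fun h => hu (Finset.mem_sdiff.mp (hT' h)).1
        have hnm : u ∉ T ∪ (K' ∪ B) := by
          simp [Finset.mem_union, huT, huK', huB]
        have hss : T ∪ B ⊆ T ∪ (K' ∪ B) :=
          Finset.union_subset_union_right Finset.subset_union_right
        have hsubm := hsub (T ∪ B) (T ∪ (K' ∪ B)) hss u hnm
        have e1 : insert u (T ∪ B) = T ∪ insert u B := by rw [Finset.union_insert]
        have e2 : insert u (T ∪ (K' ∪ B)) = T ∪ (K ∪ B) := by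
          rw [← Finset.union_insert, ← Finset.insert_union, hinsK]
        rw [e1, e2] at hsubm
        have hw : (0:ℝ) ≤ p ^ T.card * (1 - p) ^ ((C' \ K').card - T.card) :=
          mul_nonneg (pow_nonneg hp0 _) (pow_nonneg h1p _)
        nlinarith [mul_le_mul_of_nonneg_left (by linarith [hsubm] :
          f (T ∪ (K ∪ B)) + f (T ∪ B) ≤ f (T ∪ insert u B) + f (T ∪ (K' ∪ B))) hw]
      nlinarith [mul_le_mul_of_nonneg_left IH1 hp0,
        mul_le_mul_of_nonneg_left IH2 h1p,
        mul_le_mul_of_nonneg_left h4 (mul_nonneg hp0 h1p)]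
    · have hKC' : K ⊆ C' := fun v hv =>
        (Finset.mem_insert.mp (hK hv)).resolve_left (fun h => huK (h ▸ hv))
      have hD : insert u C' \ K = insert u (C' \ K) := by
        ext v
        simp only [Finset.mem_sdiff, Finset.mem_insert]
        constructor
        · rintro ⟨h1 | h1, h2⟩
          · exact Or.inl h1
          · exact Or.inr ⟨h1, h2⟩
        · rintro (h1 | ⟨h1, h2⟩)
          · exact ⟨Or.inl h1, fun h => huK (h1 ▸ h)⟩
          · exact ⟨Or.inr h1, h2⟩
      have huD : u ∉ C' \ K := fun h => hu (Finset.mem_sdiff.mp h).1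
      rw [ext'_insert f p B hu, hD, ext'_insert f p (K ∪ B) huD, ext'_insert f p B huD]
      have IH1 := ih (insert u B) K hdisj'' hKC'
      have IH2 := ih B K hdisj' hKC'
      have e : K ∪ insert u B = insert u (K ∪ B) := by rw [Finset.union_insert]
      rw [e] at IH1
      nlinarith [mul_le_mul_of_nonneg_left IH1 hp0,
        mul_le_mul_of_nonneg_left IH2 h1p]

noncomputable def mext (f : Finset α → ℝ) (x : α → ℝ) (U : Finset α) : ℝ :=
  ∑ A ∈ U.powerset, f A * ((∏ u ∈ A, x u) * ∏ u ∈ U \ A, (1 - x u))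

lemma mext_insert (f : Finset α → ℝ) (x : α → ℝ) {u : α} {U : Finset α} (hu : u ∉ U) :
    mext f x (insert u U)
      = x u * mext (fun A => f (insert u A)) x U + (1 - x u) * mext f x U := by
  have h0 : mext f x (insert u U)
      = (∑ A ∈ U.powerset, f A * ((∏ v ∈ A, x v) * ∏ v ∈ insert u U \ A, (1 - x v)))
        + ∑ A ∈ U.powerset,
            f (insert u A) * ((∏ v ∈ insert u A, x v) * ∏ v ∈ insert u U \ insert u A, (1 - x v)) := by
    unfold mext
    exact Finset.sum_powerset_insert hu _
  have hA : (∑ A ∈ U.powerset, f A * ((∏ v ∈ A, x v) * ∏ v ∈ insert u U \ A, (1 - x v)))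
      = (1 - x u) * mext f x U := by
    unfold mext
    rw [Finset.mul_sum]
    apply Finset.sum_congr rfl; intro A hA
    have hA' : A ⊆ U := Finset.mem_powerset.mp hA
    have h1 : insert u U \ A = insert u (U \ A) := by
      ext v
      simp only [Finset.mem_sdiff, Finset.mem_insert]
      constructor
      · rintro ⟨h1 | h1, h2⟩
        · exact Or.inl h1
        · exact Or.inr ⟨h1, h2⟩
      · rintro (h1 | ⟨h1, h2⟩)
        · exact ⟨Or.inl h1, fun h => hu (hA' (h1 ▸ h))⟩
        · exact ⟨Or.inr h1, h2⟩
    have huUA : u ∉ U \ A := fun h => hu (Finset.mem_sdiff.mp h).1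
    rw [h1, Finset.prod_insert huUA]
    ring
  have hB : (∑ A ∈ U.powerset,
        f (insert u A) * ((∏ v ∈ insert u A, x v) * ∏ v ∈ insert u U \ insert u A, (1 - x v)))
      = x u * mext (fun A => f (insert u A)) x U := by
    unfold mext
    rw [Finset.mul_sum]
    apply Finset.sum_congr rfl; intro A hA
    have hA' : A ⊆ U := Finset.mem_powerset.mp hA
    have huA : u ∉ A := fun h => hu (hA' h)
    have h2 : insert u U \ insert u A = U \ A := by
      ext v
      simp only [Finset.mem_sdiff, Finset.mem_insert, not_or]
      constructor
      · rintro ⟨h1 | h1, h2, h3⟩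
        · exact absurd h1 h2
        · exact ⟨h1, h3⟩
      · rintro ⟨h1, h2⟩
        exact ⟨Or.inr h1, fun he => hu (he ▸ h1), h2⟩
    rw [h2, Finset.prod_insert huA]
    ring
  rw [h0, hA, hB]; ring

lemma mext_eq (p : ℝ) (S O : Finset α) (U : Finset α) :
    ∀ f : Finset α → ℝ,
      mext f (fun v => (if v ∈ S then p else 0) + (if v ∈ O \ S then 1 else 0)) U
        = ext' f p (U ∩ S) (U ∩ (O \ S)) := by
  induction U using Finset.induction_on with
  | empty => intro f; simp [mext, ext']
  | @insert u U hu ih =>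
    intro f
    rw [mext_insert _ _ hu, ih, ih]
    by_cases huS : u ∈ S
    · have huOS : u ∉ O \ S := fun h => (Finset.mem_sdiff.mp h).2 huS
      have e1 : insert u U ∩ S = insert u (U ∩ S) := Finset.insert_inter_of_mem huS
      have e2 : insert u U ∩ (O \ S) = U ∩ (O \ S) := Finset.insert_inter_of_notMem huOS
      have huUS : u ∉ U ∩ S := fun h => hu (Finset.mem_inter.mp h).1
      rw [e1, e2, ext'_insert f p _ huUS, ← ext'_compose]
      simp [huS, huOS]
    · by_cases huOS : u ∈ O \ S
      · have e1 : insert u U ∩ S = U ∩ S := Finset.insert_inter_of_notMem huS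
        have e2 : insert u U ∩ (O \ S) = insert u (U ∩ (O \ S)) :=
          Finset.insert_inter_of_mem huOS
        rw [e1, e2, ← ext'_compose]
        simp [huS, huOS]
      · have e1 : insert u U ∩ S = U ∩ S := Finset.insert_inter_of_notMem huS
        have e2 : insert u U ∩ (O \ S) = U ∩ (O \ S) := Finset.insert_inter_of_notMem huOS
        rw [e1, e2]
        simp [huS, huOS]

end Aux

lemma multilinear_eq_mext {α : Type*} [Fintype α] [DecidableEq α]
    (f : Finset α → ℝ) (x : α → ℝ) : multilinear f x = mext f x Finset.univ := by
  unfold multilinear mext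
  rw [Finset.powerset_univ]
  apply Finset.sum_congr rfl
  intro A _
  rw [Finset.compl_eq_univ_sdiff]

/-- (cf. Lemma `belowK_lower`) For non-negative submodular `f` with
multilinear extension `F`, `p ∈ [0,1]`, and any sets `S, O`:
`F(p·1_S + 1_{O∖S}) ≥ (1 − p)·[p·f(O) + (1 − p)·f(O∖S)]`. -/
theorem stmt_6 {α : Type*} [Fintype α] [DecidableEq α] (f : Finset α → ℝ)
    (hf0 : ∀ A : Finset α, 0 ≤ f A) (hsub : Submodular f)
    (p : ℝ) (hp : p ∈ Set.Icc (0 : ℝ) 1) (S O : Finset α) :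
    (1 - p) * (p * f O + (1 - p) * f (O \ S)) ≤
      multilinear f (fun v => (if v ∈ S then p else 0) + (if v ∈ O \ S then 1 else 0)) := by
  obtain ⟨hp0, hp1⟩ := hp
  have h1p : (0:ℝ) ≤ 1 - p := by linarith
  have hx : multilinear f (fun v => (if v ∈ S then p else 0) + (if v ∈ O \ S then 1 else 0))
      = ext' f p S (O \ S) := by
    rw [multilinear_eq_mext, mext_eq p S O Finset.univ f, Finset.univ_inter, Finset.univ_inter]
  rw [hx]
  have h1 := ext'_key hp0 hp1 hsub S (O \ S) (O ∩ S)
    Finset.disjoint_sdiff Finset.inter_subset_right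
  have e1 : S \ (O ∩ S) = S \ O := by
    ext v; simp only [Finset.mem_sdiff, Finset.mem_inter]; tauto
  have e2 : (O ∩ S) ∪ (O \ S) = O := by
    ext v; simp only [Finset.mem_union, Finset.mem_inter, Finset.mem_sdiff]; tauto
  rw [e1, e2] at h1
  have hd2 : Disjoint (S \ O) O := Finset.sdiff_disjoint
  have hd3 : Disjoint (S \ O) (O \ S) := by
    rw [Finset.disjoint_left]
    intro v hv hv2
    exact (Finset.mem_sdiff.mp hv).2 (Finset.mem_sdiff.mp hv2).1
  have h2 := ext'_key hp0 hp1 hsub (S \ O) O (S \ O) hd2 (subset_refl _)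
  have h3 := ext'_key hp0 hp1 hsub (S \ O) (O \ S) (S \ O) hd3 (subset_refl _)
  rw [Finset.sdiff_self, ext'_empty, ext'_empty] at h2 h3
  have k2 : (1 - p) * f O ≤ ext' f p (S \ O) O := by
    nlinarith [mul_nonneg hp0 (hf0 ((S \ O) ∪ O))]
  have k3 : (1 - p) * f (O \ S) ≤ ext' f p (S \ O) (O \ S) := by
    nlinarith [mul_nonneg hp0 (hf0 ((S \ O) ∪ (O \ S)))]
  nlinarith [mul_le_mul_of_nonneg_left k2 hp0, mul_le_mul_of_nonneg_left k3 h1p]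
end

section
/- Let f : 2^N → ℝ be a submodular function on a finite ground set N with multilinear extension F, let c, τ ≥ 0 be reals, let k ≥ 1 be an integer, let x̂ ∈ [0,1]^N, and let O ⊆ N be a set with |O| ≤ k. If ∂_u F(x̂) < cτ/k for every u ∈ O ∖ supp(x̂), then F(x̂ + 1_{O∖supp(x̂)}) ≤ F(x̂) + cτ. -/
open Finset

section Aux
variable {α : Type*} [Fintype α] [DecidableEq α]

/-- Set the coordinates in `S` to one. -/
def setOne (S : Finset α) (y : α → ℝ) : α → ℝ :=
  fun v => if v ∈ S then 1 else y v

lemma setOne_mem (S : Finset α) (y : α → ℝ) (hy : ∀ v, y v ∈ Set.Icc (0:ℝ) 1) :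
    ∀ v, setOne S y v ∈ Set.Icc (0:ℝ) 1 := by
  intro v; unfold setOne
  split
  · exact ⟨zero_le_one, le_refl 1⟩
  · exact hy v

lemma setOne_insert (u : α) (S : Finset α) (y : α → ℝ) :
    setOne (insert u S) y = setOne {u} (setOne S y) := by
  funext w
  by_cases h : w = u <;> by_cases h2 : w ∈ S <;> simp [setOne, h, h2]

lemma sum_split (g : Finset α → ℝ) (u : α) :
    ∑ A : Finset α, g A
      = ∑ A ∈ (univ.erase u).powerset, (g A + g (insert u A)) := by
  rw [Finset.sum_add_distrib, ← Finset.sum_powerset_insert (Finset.notMem_erase u univ),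
    Finset.insert_erase (Finset.mem_univ u), Finset.powerset_univ]

/-- The weight of a set `A` (not containing `u`) in the derivative formula. -/
noncomputable def W (u : α) (A : Finset α) (y : α → ℝ) : ℝ :=
  (∏ v ∈ A, y v) * ∏ v ∈ (insert u A)ᶜ, (1 - y v)

lemma W_nonneg {y : α → ℝ} (hy : ∀ v, y v ∈ Set.Icc (0:ℝ) 1) (u : α) (A : Finset α) :
    0 ≤ W u A y :=
  mul_nonneg (Finset.prod_nonneg fun v _ => (hy v).1)
    (Finset.prod_nonneg fun v _ => by linarith [(hy v).2])

lemma deriv_formula (f : Finset α → ℝ) (u : α) (y : α → ℝ)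
    (hy : ∀ v, y v ∈ Set.Icc (0:ℝ) 1) :
    mlDeriv f u y = ∑ A ∈ (univ.erase u).powerset, (f (insert u A) - f A) * W u A y := by
  set z : α → ℝ := fun v => max (y v) (if v = u then 1 else 0) with hz
  set z' : α → ℝ := fun v => min (y v) (if v = u then 0 else 1) with hz'
  have hzu : z u = 1 := by simp [hz, max_eq_right (hy u).2]
  have hzv : ∀ v, v ≠ u → z v = y v := by
    intro v hv; simp [hz, hv, max_eq_left (hy v).1]
  have hz'u : z' u = 0 := by simp [hz', min_eq_right (hy u).1]
  have hz'v : ∀ v, v ≠ u → z' v = y v := by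
    intro v hv; simp [hz', hv, min_eq_left (hy v).2]
  unfold mlDeriv multilinear
  rw [sum_split (fun A => f A * ((∏ v ∈ A, z v) * ∏ v ∈ Aᶜ, (1 - z v))) u,
      sum_split (fun A => f A * ((∏ v ∈ A, z' v) * ∏ v ∈ Aᶜ, (1 - z' v))) u,
      ← Finset.sum_sub_distrib]
  apply Finset.sum_congr rfl
  intro A hA
  have hAsub : A ⊆ univ.erase u := Finset.mem_powerset.mp hA
  have huA : u ∉ A := fun h => (Finset.mem_erase.mp (hAsub h)).1 rfl
  have hmemA : ∀ v ∈ A, v ≠ u := fun v hv => (Finset.mem_erase.mp (hAsub hv)).1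
  have hmemC : ∀ v ∈ (insert u A)ᶜ, v ≠ u := by
    intro v hv h; subst h; exact (Finset.mem_compl.mp hv) (Finset.mem_insert_self v A)
  have e1 : f A * ((∏ v ∈ A, z v) * ∏ v ∈ Aᶜ, (1 - z v)) = 0 := by
    have : ∏ v ∈ Aᶜ, (1 - z v) = 0 :=
      Finset.prod_eq_zero (Finset.mem_compl.mpr huA) (by rw [hzu]; ring)
    rw [this]; ring
  have hpA : ∏ v ∈ A, z v = ∏ v ∈ A, y v :=
    Finset.prod_congr rfl fun v hv => hzv v (hmemA v hv)
  have hpC : ∏ v ∈ (insert u A)ᶜ, (1 - z v) = ∏ v ∈ (insert u A)ᶜ, (1 - y v) :=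
    Finset.prod_congr rfl fun v hv => by rw [hzv v (hmemC v hv)]
  have hpA' : ∏ v ∈ A, z' v = ∏ v ∈ A, y v :=
    Finset.prod_congr rfl fun v hv => hz'v v (hmemA v hv)
  have hpC' : ∏ v ∈ (insert u A)ᶜ, (1 - z' v) = ∏ v ∈ (insert u A)ᶜ, (1 - y v) :=
    Finset.prod_congr rfl fun v hv => by rw [hz'v v (hmemC v hv)]
  have e2 : f (insert u A) * ((∏ v ∈ insert u A, z v) * ∏ v ∈ (insert u A)ᶜ, (1 - z v))
      = f (insert u A) * W u A y := by
    rw [Finset.prod_insert huA, hzu, one_mul, hpA, hpC]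
    rfl
  have e3 : f A * ((∏ v ∈ A, z' v) * ∏ v ∈ Aᶜ, (1 - z' v)) = f A * W u A y := by
    have hC : Aᶜ = insert u (insert u A)ᶜ := by
      rw [Finset.compl_insert, Finset.insert_erase (Finset.mem_compl.mpr huA)]
    rw [hC, Finset.prod_insert (by rw [Finset.compl_insert]; exact Finset.notMem_erase u _),
      hz'u, hpA', hpC']
    unfold W; ring
  have e4 : f (insert u A) * ((∏ v ∈ insert u A, z' v) * ∏ v ∈ (insert u A)ᶜ, (1 - z' v)) = 0 := by
    rw [Finset.prod_insert huA, hz'u]; ring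
  rw [e1, e2, e3, e4]; ring

lemma deriv_anti_one (f : Finset α → ℝ) (hsub : Submodular f) (u v : α) (hvu : v ≠ u)
    (y : α → ℝ) (hy : ∀ w, y w ∈ Set.Icc (0:ℝ) 1) (hyv : y v = 0) :
    mlDeriv f u (setOne {v} y) ≤ mlDeriv f u y := by
  set y' := setOne {v} y with hy'def
  have hy' : ∀ w, y' w ∈ Set.Icc (0:ℝ) 1 := setOne_mem _ _ hy
  have hy'v : y' v = 1 := by simp [hy'def, setOne]
  have hy'w : ∀ w, w ≠ v → y' w = y w := by
    intro w hw; simp [hy'def, setOne, hw]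
  rw [deriv_formula f u y hy, deriv_formula f u y' hy']
  have hvmem : v ∈ univ.erase u := Finset.mem_erase.mpr ⟨hvu, Finset.mem_univ v⟩
  rw [← Finset.insert_erase hvmem,
    Finset.sum_powerset_insert (Finset.notMem_erase v _),
    Finset.sum_powerset_insert (Finset.notMem_erase v _)]
  have key : ∀ A ∈ ((univ.erase u).erase v).powerset,
      v ∉ A ∧ u ∉ A := by
    intro A hA
    have hsubA := Finset.mem_powerset.mp hA
    constructor
    · exact fun h => Finset.notMem_erase v _ (hsubA h)
    · exact fun h => (Finset.mem_erase.mp (Finset.mem_erase.mp (hsubA h)).2).1 rfl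
  have hzero1 : ∑ A ∈ ((univ.erase u).erase v).powerset,
      (f (insert u A) - f A) * W u A y' = 0 := by
    apply Finset.sum_eq_zero
    intro A hA
    obtain ⟨hvA, huA⟩ := key A hA
    have hvC : v ∈ (insert u A)ᶜ := by
      rw [Finset.mem_compl, Finset.mem_insert]; push_neg; exact ⟨hvu, hvA⟩
    have : W u A y' = 0 := by
      unfold W; rw [Finset.prod_eq_zero hvC (by rw [hy'v]; ring)]; ring
    rw [this]; ring
  have hzero2 : ∑ A ∈ ((univ.erase u).erase v).powerset,
      (f (insert u (insert v A)) - f (insert v A)) * W u (insert v A) y = 0 := by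
    apply Finset.sum_eq_zero
    intro A hA
    obtain ⟨hvA, huA⟩ := key A hA
    have : W u (insert v A) y = 0 := by
      unfold W; rw [Finset.prod_insert hvA, hyv]; ring
    rw [this]; ring
  rw [hzero1, hzero2, zero_add, add_zero]
  apply Finset.sum_le_sum
  intro A hA
  obtain ⟨hvA, huA⟩ := key A hA
  have huvA : u ∉ insert v A := by
    rw [Finset.mem_insert]; push_neg; exact ⟨fun h => hvu h.symm, huA⟩
  have hW : W u (insert v A) y' = W u A y := by
    unfold W
    have h1 : ∏ w ∈ insert v A, y' w = ∏ w ∈ A, y w := by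
      rw [Finset.prod_insert hvA, hy'v, one_mul]
      exact Finset.prod_congr rfl fun w hw => hy'w w (fun h => hvA (h ▸ hw))
    have hvC : v ∈ (insert u A)ᶜ := by
      rw [Finset.mem_compl, Finset.mem_insert]; push_neg; exact ⟨hvu, hvA⟩
    have h2 : (insert u (insert v A))ᶜ = ((insert u A)ᶜ).erase v := by
      rw [Finset.insert_comm, Finset.compl_insert]
    have h3 : ∏ w ∈ (insert u (insert v A))ᶜ, (1 - y' w)
        = ∏ w ∈ (insert u A)ᶜ, (1 - y w) := by
      rw [h2, ← Finset.mul_prod_erase _ _ hvC, hyv, sub_zero, one_mul]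
      exact Finset.prod_congr rfl fun w hw =>
        by rw [hy'w w (Finset.ne_of_mem_erase hw)]
    rw [h1, h3]
  rw [hW]
  have hle : f (insert u (insert v A)) - f (insert v A) ≤ f (insert u A) - f A :=
    hsub A (insert v A) (Finset.subset_insert v A) u huvA
  exact mul_le_mul_of_nonneg_right hle (W_nonneg hy u A)

lemma deriv_anti (f : Finset α → ℝ) (hsub : Submodular f) (u : α)
    (y : α → ℝ) (hy : ∀ w, y w ∈ Set.Icc (0:ℝ) 1) :
    ∀ T : Finset α, u ∉ T → (∀ v ∈ T, y v = 0) →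
      mlDeriv f u (setOne T y) ≤ mlDeriv f u y := by
  intro T
  induction T using Finset.induction_on with
  | empty =>
    intro _ _
    have h : setOne (∅ : Finset α) y = y := funext fun v => if_neg (Finset.notMem_empty v)
    rw [h]
  | @insert v T hvT ih =>
    intro hu hT
    rw [setOne_insert]
    have huT : u ∉ T := fun h => hu (Finset.mem_insert_of_mem h)
    have hvu : v ≠ u := fun h => hu (h ▸ Finset.mem_insert_self v T)
    have h1 : mlDeriv f u (setOne {v} (setOne T y)) ≤ mlDeriv f u (setOne T y) := by
      apply deriv_anti_one f hsub u v hvu _ (setOne_mem _ _ hy)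
      simp [setOne, hvT, hT v (Finset.mem_insert_self v T)]
    exact h1.trans (ih huT fun w hw => hT w (Finset.mem_insert_of_mem hw))

lemma marginal_eq (f : Finset α → ℝ) (u : α) (y : α → ℝ)
    (hy : ∀ v, y v ∈ Set.Icc (0:ℝ) 1) (hyu : y u = 0) :
    multilinear f (setOne {u} y) = multilinear f y + mlDeriv f u y := by
  unfold mlDeriv
  have h1 : (fun v => max (y v) (if v = u then 1 else 0)) = setOne {u} y := by
    funext v
    by_cases h : v = u
    · subst h; simp [setOne, hyu]
    · simp [setOne, h, max_eq_left (hy v).1]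
  have h2 : (fun v => min (y v) (if v = u then 0 else 1)) = y := by
    funext v
    by_cases h : v = u
    · subst h; simp [hyu]
    · simp [h, min_eq_left (hy v).2]
  rw [h1, h2]; ring

lemma telescope (f : Finset α → ℝ) (hsub : Submodular f) :
    ∀ (S : Finset α) (y : α → ℝ), (∀ v, y v ∈ Set.Icc (0:ℝ) 1) →
      (∀ v ∈ S, y v = 0) →
      multilinear f (setOne S y) ≤ multilinear f y + ∑ u ∈ S, mlDeriv f u y := by
  intro S
  induction S using Finset.induction_on with
  | empty =>
    intro y hy _
    have h : setOne (∅ : Finset α) y = y := funext fun v => if_neg (Finset.notMem_empty v)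
    simp [h]
  | @insert u S huS ih =>
    intro y hy hS
    have hz := setOne_mem S y hy
    have hzu : setOne S y u = 0 := by
      simp [setOne, huS, hS u (Finset.mem_insert_self u S)]
    rw [setOne_insert, marginal_eq f u _ hz hzu, Finset.sum_insert huS]
    have h2 : mlDeriv f u (setOne S y) ≤ mlDeriv f u y :=
      deriv_anti f hsub u y hy S huS (fun v hv => hS v (Finset.mem_insert_of_mem hv))
    have h3 := ih y hy (fun v hv => hS v (Finset.mem_insert_of_mem hv))
    linarith

end Aux

/-- (cf. Lemma `belowK_upper`) If `x̂ ∈ [0,1]^N`, `|O| ≤ k`, and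
`∂_u F(x̂) < cτ/k` for every `u ∈ O ∖ supp(x̂)`, then
`F(x̂ + 1_{O∖supp(x̂)}) ≤ F(x̂) + cτ`. -/
theorem stmt_7 {α : Type*} [Fintype α] [DecidableEq α] (f : Finset α → ℝ)
    (hsub : Submodular f)
    (c τ : ℝ) (hc : 0 ≤ c) (hτ : 0 ≤ τ) (k : ℕ) (hk : 1 ≤ k)
    (x : α → ℝ) (hx : ∀ v, x v ∈ Set.Icc (0 : ℝ) 1)
    (O : Finset α) (hO : O.card ≤ k)
    (hthresh : ∀ u ∈ O.filter (fun v => ¬ 0 < x v), mlDeriv f u x < c * τ / k) :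
    multilinear f (fun v => x v + if v ∈ O.filter (fun w => ¬ 0 < x w) then 1 else 0)
      ≤ multilinear f x + c * τ := by
  set S := O.filter (fun w => ¬ 0 < x w) with hSdef
  have hS0 : ∀ v ∈ S, x v = 0 := by
    intro v hv
    have := (Finset.mem_filter.mp hv).2
    exact le_antisymm (not_lt.mp this) (hx v).1
  have hvec : (fun v => x v + if v ∈ S then 1 else 0) = setOne S x := by
    funext v
    by_cases h : v ∈ S
    · simp [setOne, h, hS0 v h]
    · simp [setOne, h]
  rw [hvec]
  have htel := telescope f hsub S x hx hS0
  have hsum : ∑ u ∈ S, mlDeriv f u x ≤ (S.card : ℝ) * (c * τ / k) := by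
    calc ∑ u ∈ S, mlDeriv f u x ≤ ∑ _u ∈ S, c * τ / k :=
          Finset.sum_le_sum (fun u hu => (hthresh u hu).le)
      _ = (S.card : ℝ) * (c * τ / k) := by rw [Finset.sum_const, nsmul_eq_mul]
  have hcard : (S.card : ℝ) ≤ (k : ℝ) := by
    exact_mod_cast le_trans (Finset.card_filter_le O _) hO
  have hpos : 0 ≤ c * τ / k := div_nonneg (mul_nonneg hc hτ) (Nat.cast_nonneg k)
  have hk0 : (k : ℝ) ≠ 0 := by
    have : (0:ℝ) < k := by exact_mod_cast hk
    linarith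
  have hfin : (S.card : ℝ) * (c * τ / k) ≤ c * τ := by
    calc (S.card : ℝ) * (c * τ / k) ≤ (k : ℝ) * (c * τ / k) :=
          mul_le_mul_of_nonneg_right hcard hpos
      _ = c * τ := by field_simp
  linarith
end

section
/- Let f : 2^N → ℝ be a non-negative submodular function on a finite ground set N with multilinear extension F, let p ∈ (0,1), let c, τ ≥ 0 be reals, let k ≥ 1 be an integer, let S ⊆ N, set x̂ = p·1_S, and let O ⊆ N be a set with |O| ≤ k. If ∂_u F(x̂) < cτ/k for every u ∈ O ∖ S, then F(x̂) ≥ (1 − p)·[p·f(O) + (1 − p)·f(O∖S)] − cτ. -/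
open Finset

/-! ### Auxiliary machinery -/

/-- The expectation of `g` over a random subset of `M` where each element is
included independently with probability `p`. -/
noncomputable def EV8 {α : Type*} [DecidableEq α] (p : ℝ) (M : Finset α)
    (g : Finset α → ℝ) : ℝ :=
  ∑ R ∈ M.powerset, p ^ R.card * (1 - p) ^ (M \ R).card * g R

lemma EV8_empty {α : Type*} [DecidableEq α] (p : ℝ) (g : Finset α → ℝ) :
    EV8 p ∅ g = g ∅ := by simp [EV8]

lemma EV8_insert {α : Type*} [DecidableEq α] (p : ℝ) {u : α} {M : Finset α}
    (hu : u ∉ M) (g : Finset α → ℝ) :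
    EV8 p (insert u M) g
      = p * EV8 p M (fun R => g (insert u R)) + (1 - p) * EV8 p M g := by
  unfold EV8
  rw [Finset.powerset_insert, Finset.sum_union, Finset.sum_image]
  · have h1 : ∀ R ∈ M.powerset,
        p ^ (insert u R).card * (1 - p) ^ ((insert u M) \ (insert u R)).card * g (insert u R)
          = p * (p ^ R.card * (1 - p) ^ (M \ R).card * g (insert u R)) := by
      intro R hR
      have hR' : R ⊆ M := Finset.mem_powerset.1 hR
      have huR : u ∉ R := fun h => hu (hR' h)
      have hc : (insert u R).card = R.card + 1 := Finset.card_insert_of_notMem huR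
      have hs : (insert u M) \ (insert u R) = M \ R := by
        ext x
        simp only [Finset.mem_sdiff, Finset.mem_insert]
        constructor
        · rintro ⟨hx1, hx2⟩
          push_neg at hx2
          rcases hx1 with rfl | hx1
          · exact absurd rfl hx2.1
          · exact ⟨hx1, fun h => hx2.2 h⟩
        · rintro ⟨hx1, hx2⟩
          refine ⟨Or.inr hx1, ?_⟩
          push_neg
          exact ⟨fun h => hu (h ▸ hx1), hx2⟩
      rw [hc, hs]; ring
    have h2 : ∀ R ∈ M.powerset,
        p ^ R.card * (1 - p) ^ ((insert u M) \ R).card * g R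
          = (1 - p) * (p ^ R.card * (1 - p) ^ (M \ R).card * g R) := by
      intro R hR
      have hR' : R ⊆ M := Finset.mem_powerset.1 hR
      have huR : u ∉ R := fun h => hu (hR' h)
      have hs : (insert u M) \ R = insert u (M \ R) := by
        rw [Finset.insert_sdiff_of_notMem _ huR]
      have hc : ((insert u M) \ R).card = (M \ R).card + 1 := by
        rw [hs, Finset.card_insert_of_notMem (fun h => hu (Finset.mem_sdiff.1 h).1)]
      rw [hc]; ring
    rw [Finset.sum_congr rfl h2, Finset.sum_congr rfl h1, ← Finset.mul_sum, ← Finset.mul_sum]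
    ring
  · intro R1 hR1 R2 hR2 h
    have h1 : u ∉ R1 := fun hh => hu (Finset.mem_powerset.1 hR1 hh)
    have h2 : u ∉ R2 := fun hh => hu (Finset.mem_powerset.1 hR2 hh)
    have := congrArg (fun s => Finset.erase s u) h
    simpa [Finset.erase_insert, h1, h2] using this
  · rw [Finset.disjoint_left]
    intro A hA hA2
    rw [Finset.mem_image] at hA2
    obtain ⟨R, hR, rfl⟩ := hA2
    exact hu (Finset.mem_powerset.1 hA (Finset.mem_insert_self u R))

lemma EV8_congr {α : Type*} [DecidableEq α] (p : ℝ) (M : Finset α)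
    {g h : Finset α → ℝ} (hgh : ∀ R, g R = h R) : EV8 p M g = EV8 p M h := by
  unfold EV8; exact Finset.sum_congr rfl fun R _ => by rw [hgh]

lemma EV8_lin {α : Type*} [DecidableEq α] (p : ℝ) (M : Finset α)
    (a b : ℝ) (g h : Finset α → ℝ) :
    EV8 p M (fun R => a * g R + b * h R) = a * EV8 p M g + b * EV8 p M h := by
  unfold EV8
  rw [Finset.mul_sum, Finset.mul_sum, ← Finset.sum_add_distrib]
  exact Finset.sum_congr rfl fun R _ => by ring

lemma EV8_add {α : Type*} [DecidableEq α] (p : ℝ) (M : Finset α)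
    (g h : Finset α → ℝ) :
    EV8 p M (fun R => g R + h R) = EV8 p M g + EV8 p M h := by
  unfold EV8
  rw [← Finset.sum_add_distrib]
  exact Finset.sum_congr rfl fun R _ => by ring

lemma EV8_sub {α : Type*} [DecidableEq α] (p : ℝ) (M : Finset α)
    (g h : Finset α → ℝ) :
    EV8 p M (fun R => g R - h R) = EV8 p M g - EV8 p M h := by
  unfold EV8
  rw [← Finset.sum_sub_distrib]
  exact Finset.sum_congr rfl fun R _ => by ring

lemma EV8_sum {α β : Type*} [DecidableEq α] (p : ℝ) (M : Finset α)
    (T : Finset β) (h : β → Finset α → ℝ) :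
    EV8 p M (fun R => ∑ u ∈ T, h u R) = ∑ u ∈ T, EV8 p M (h u) := by
  unfold EV8
  rw [Finset.sum_comm]
  exact Finset.sum_congr rfl fun R _ => by rw [Finset.mul_sum]

lemma EV8_mono {α : Type*} [DecidableEq α] {p : ℝ} (hp0 : 0 ≤ p) (hp1 : p ≤ 1)
    (M : Finset α) {g h : Finset α → ℝ} (hgh : ∀ R ∈ M.powerset, g R ≤ h R) :
    EV8 p M g ≤ EV8 p M h := by
  unfold EV8
  refine Finset.sum_le_sum fun R hR => ?_
  have hw : 0 ≤ p ^ R.card * (1 - p) ^ (M \ R).card :=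
    mul_nonneg (pow_nonneg hp0 _) (pow_nonneg (by linarith) _)
  exact mul_le_mul_of_nonneg_left (hgh R hR) hw

lemma Submodular.shift8 {α : Type*} [DecidableEq α] {f : Finset α → ℝ}
    (hf : Submodular f) (T : Finset α) : Submodular (fun A => f (T ∪ A)) := by
  intro A B hAB u hu
  by_cases hT : u ∈ T
  · simp [Finset.union_insert, Finset.insert_eq_self, hT]
  · have h := hf (T ∪ A) (T ∪ B) (Finset.union_subset_union_right hAB) u
      (by simp [hT, hu])
    simpa [Finset.union_insert] using h

lemma Submodular.insert8 {α : Type*} [DecidableEq α] {f : Finset α → ℝ}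
    (hf : Submodular f) (u : α) : Submodular (fun A => f (insert u A)) := by
  have h := hf.shift8 {u}
  have : (fun A : Finset α => f ({u} ∪ A)) = fun A => f (insert u A) := by
    funext A; rw [← Finset.insert_eq]
  rwa [this] at h

lemma EV8_concave {α : Type*} [DecidableEq α] {p : ℝ} (hp0 : 0 ≤ p) (hp1 : p ≤ 1)
    (M : Finset α) : ∀ g : Finset α → ℝ, Submodular g →
    (1 - p) * g ∅ + p * g M ≤ EV8 p M g := by
  induction M using Finset.induction_on with
  | empty => intro g _; rw [EV8_empty]; ring_nf; rfl
  | @insert u M' hu ih =>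
    intro g hg
    rw [EV8_insert p hu g]
    have h1 := ih (fun R => g (insert u R)) (hg.insert8 u)
    have h2 := ih g hg
    have hsm := hg ∅ M' (Finset.empty_subset M') u hu
    have hq : 0 ≤ 1 - p := by linarith
    nlinarith [mul_le_mul_of_nonneg_left h1 hp0, mul_le_mul_of_nonneg_left h2 hq,
      mul_nonneg hp0 hq]

lemma EV8_union {α : Type*} [DecidableEq α] (p : ℝ) (J : Finset α) :
    ∀ (I : Finset α) (g : Finset α → ℝ), Disjoint I J →
    EV8 p (I ∪ J) g = EV8 p J (fun R2 => EV8 p I (fun R1 => g (R1 ∪ R2))) := by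
  intro I
  induction I using Finset.induction_on with
  | empty =>
    intro g _
    rw [Finset.empty_union]
    refine (EV8_congr p J fun R2 => ?_).symm
    rw [EV8_empty]
    rw [Finset.empty_union]
  | @insert u I' hu ih =>
    intro g hd
    have huJ : u ∉ J := fun h =>
      (Finset.disjoint_left.1 hd (Finset.mem_insert_self u I')) h
    have hd' : Disjoint I' J := hd.mono_left (Finset.subset_insert u I')
    have huIJ : u ∉ I' ∪ J := by simp [hu, huJ]
    rw [Finset.insert_union, EV8_insert p huIJ g, ih (fun R => g (insert u R)) hd',
      ih g hd']
    have : ∀ R2 : Finset α,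
        EV8 p (insert u I') (fun R1 => g (R1 ∪ R2))
          = p * EV8 p I' (fun R1 => g (insert u (R1 ∪ R2)))
            + (1 - p) * EV8 p I' (fun R1 => g (R1 ∪ R2)) := by
      intro R2
      rw [EV8_insert p hu,
        EV8_congr p I' (g := fun R1 => g (insert u R1 ∪ R2))
          (h := fun R1 => g (insert u (R1 ∪ R2)))
          (fun R1 => by simp only [Finset.insert_union])]
    rw [EV8_congr p J fun R2 => this R2, EV8_lin]

lemma submod_subadd {α : Type*} [DecidableEq α] {f : Finset α → ℝ}
    (hsub : Submodular f) : ∀ (T R : Finset α), Disjoint T R →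
    f (T ∪ R) ≤ f R + ∑ u ∈ T, (f (insert u R) - f R) := by
  intro T
  induction T using Finset.induction_on with
  | empty => intro R _; simp
  | @insert v T' hv ih =>
    intro R hd
    have hvR : v ∉ R := fun h =>
      Finset.disjoint_left.1 hd (Finset.mem_insert_self v T') h
    have hd' : Disjoint T' R := hd.mono_left (Finset.subset_insert v T')
    have hvT'R : v ∉ T' ∪ R := by simp [hv, hvR]
    have key := hsub R (T' ∪ R) Finset.subset_union_right v hvT'R
    have hIH := ih R hd'
    rw [Finset.insert_union, Finset.sum_insert hv]
    linarith [key, hIH]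

lemma ML_EV8 {α : Type*} [Fintype α] [DecidableEq α] (f : Finset α → ℝ) (p : ℝ)
    {T S : Finset α} (hd : Disjoint T S) :
    multilinear f (fun v => if v ∈ T then 1 else if v ∈ S then p else 0)
      = EV8 p S (fun R => f (T ∪ R)) := by
  set y : α → ℝ := fun v => if v ∈ T then 1 else if v ∈ S then p else 0 with hy
  have hterm : ∀ A : Finset α, A ∉ S.powerset.image (fun R => T ∪ R) →
      f A * ((∏ u ∈ A, y u) * ∏ u ∈ Aᶜ, (1 - y u)) = 0 := by
    intro A hA
    by_cases hTA : T ⊆ A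
    · by_cases hAS : A ⊆ T ∪ S
      · exfalso
        apply hA
        rw [Finset.mem_image]
        refine ⟨A \ T, Finset.mem_powerset.2 ?_, ?_⟩
        · intro x hx
          rw [Finset.mem_sdiff] at hx
          rcases Finset.mem_union.1 (hAS hx.1) with h | h
          · exact absurd h hx.2
          · exact h
        · rw [Finset.union_sdiff_of_subset hTA]
      · obtain ⟨u, huA, huTS⟩ := Finset.not_subset.1 hAS
        have : y u = 0 := by
          simp only [hy]
          rw [if_neg (fun h => huTS (Finset.mem_union_left _ h)),
            if_neg (fun h => huTS (Finset.mem_union_right _ h))]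
        rw [Finset.prod_eq_zero huA this]
        ring
    · obtain ⟨u, huT, huA⟩ := Finset.not_subset.1 hTA
      have hyu : 1 - y u = 0 := by simp [hy, huT]
      rw [Finset.prod_eq_zero (Finset.mem_compl.2 huA) hyu]
      ring
  have hsum : multilinear f y
      = ∑ A ∈ S.powerset.image (fun R => T ∪ R),
          f A * ((∏ u ∈ A, y u) * ∏ u ∈ Aᶜ, (1 - y u)) := by
    refine (Finset.sum_subset (Finset.subset_univ _) ?_).symm
    intro A _ hA
    exact hterm A hA
  rw [hsum, Finset.sum_image]
  · unfold EV8
    refine Finset.sum_congr rfl fun R hR => ?_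
    have hRS : R ⊆ S := Finset.mem_powerset.1 hR
    have hdTR : Disjoint T R := hd.mono_right hRS
    have hprod1 : (∏ u ∈ T ∪ R, y u) = p ^ R.card := by
      rw [Finset.prod_union hdTR]
      have h1 : (∏ u ∈ T, y u) = 1 :=
        Finset.prod_eq_one fun u hu => by simp [hy, hu]
      have h2 : (∏ u ∈ R, y u) = p ^ R.card := by
        rw [Finset.prod_congr rfl (fun u hu => ?_), Finset.prod_const]
        have huS : u ∈ S := hRS hu
        have huT : u ∉ T := Finset.disjoint_right.1 hd huS
        simp [hy, huT, huS]
      rw [h1, h2, one_mul]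
    have hprod2 : (∏ u ∈ (T ∪ R)ᶜ, (1 - y u)) = (1 - p) ^ (S \ R).card := by
      have hsub : S \ R ⊆ (T ∪ R)ᶜ := by
        intro x hx
        rw [Finset.mem_sdiff] at hx
        rw [Finset.mem_compl, Finset.mem_union]
        push_neg
        exact ⟨Finset.disjoint_right.1 hd hx.1, hx.2⟩
      rw [← Finset.prod_subset hsub (fun x hc hx => ?_)]
      · rw [Finset.prod_congr rfl (fun u hu => ?_), Finset.prod_const]
        rw [Finset.mem_sdiff] at hu
        have huT : u ∉ T := Finset.disjoint_right.1 hd hu.1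
        simp [hy, huT, hu.1]
      · rw [Finset.mem_compl, Finset.mem_union] at hc
        push_neg at hc
        rw [Finset.mem_sdiff] at hx
        push_neg at hx
        have hxS : x ∉ S := fun h => hc.2 (hx h)
        simp [hy, hc.1, hxS]
    rw [hprod1, hprod2]
    ring
  · intro R1 hR1 R2 hR2 h
    have d1 : Disjoint T R1 := hd.mono_right (Finset.mem_powerset.1 hR1)
    have d2 : Disjoint T R2 := hd.mono_right (Finset.mem_powerset.1 hR2)
    have := congrArg (fun s => s \ T) h
    simpa [Finset.union_sdiff_cancel_left d1, Finset.union_sdiff_cancel_left d2] using this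

/-- (cf. Corollary `belowK`) For `x̂ = p·1_S` with `p ∈ (0,1)`, if
`|O| ≤ k` and `∂_u F(x̂) < cτ/k` for every `u ∈ O ∖ S`, then
`F(x̂) ≥ (1 − p)·[p·f(O) + (1 − p)·f(O∖S)] − cτ`. -/
theorem stmt_8 {α : Type*} [Fintype α] [DecidableEq α] (f : Finset α → ℝ)
    (hf0 : ∀ A : Finset α, 0 ≤ f A) (hsub : Submodular f)
    (p : ℝ) (hp : p ∈ Set.Ioo (0 : ℝ) 1)
    (c τ : ℝ) (hc : 0 ≤ c) (hτ : 0 ≤ τ) (k : ℕ) (hk : 1 ≤ k)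
    (S O : Finset α) (hO : O.card ≤ k)
    (hthresh : ∀ u ∈ O \ S,
      mlDeriv f u (fun v => if v ∈ S then p else 0) < c * τ / k) :
    (1 - p) * (p * f O + (1 - p) * f (O \ S)) - c * τ ≤
      multilinear f (fun v => if v ∈ S then p else 0) := by
  obtain ⟨hp0', hp1'⟩ := hp
  have hp0 : (0:ℝ) ≤ p := le_of_lt hp0'
  have hp1 : p ≤ 1 := le_of_lt hp1'
  have hq0 : (0:ℝ) ≤ 1 - p := by linarith
  set T := O \ S with hT
  set I := O ∩ S with hI
  have hTS : Disjoint T S := Finset.sdiff_disjoint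
  have hIS : I ⊆ S := Finset.inter_subset_right
  have hTI : T ∪ I = O := Finset.sdiff_union_inter O S
  -- F(x̂) = E[f(R_p(S))]
  have hML : multilinear f (fun v => if v ∈ S then p else 0) = EV8 p S f := by
    have h := ML_EV8 f p (T := (∅ : Finset α)) (S := S) (Finset.disjoint_left.2 (by simp))
    have hfun : (fun v => if v ∈ (∅ : Finset α) then (1:ℝ) else if v ∈ S then p else 0)
        = fun v => if v ∈ S then p else 0 := by
      funext v; simp
    rw [hfun] at h
    rw [h]
    exact EV8_congr p S fun R => by rw [Finset.empty_union]
  -- derivative identity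
  have hDeriv : ∀ u ∈ T, mlDeriv f u (fun v => if v ∈ S then p else 0)
      = EV8 p S (fun R => f (insert u R)) - EV8 p S f := by
    intro u hu
    have huS : u ∉ S := (Finset.mem_sdiff.1 hu).2
    unfold mlDeriv
    have hmax : (fun v => max (if v ∈ S then p else 0) (if v = u then (1:ℝ) else 0))
        = fun v => if v ∈ ({u} : Finset α) then (1:ℝ) else if v ∈ S then p else 0 := by
      funext v
      by_cases hv : v = u
      · subst hv; simp [huS]
      · by_cases hvS : v ∈ S <;> simp [hv, hvS, hp0]
    have hmin : (fun v => min (if v ∈ S then p else 0) (if v = u then (0:ℝ) else 1))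
        = fun v => if v ∈ S then p else 0 := by
      funext v
      by_cases hv : v = u
      · subst hv; simp [huS]
      · by_cases hvS : v ∈ S <;> simp [hv, hvS, hp1]
    rw [hmax, hmin, hML, ML_EV8 f p (Finset.disjoint_singleton_left.2 huS),
      EV8_congr p S (g := fun R => f ({u} ∪ R)) (h := fun R => f (insert u R))
        (fun R => by simp only [← Finset.insert_eq])]
  -- Step A : E[f(T ∪ R)] ≤ E[f(R)] + cτ
  have hA : EV8 p S (fun R => f (T ∪ R)) ≤ EV8 p S f + c * τ := by
    have h1 : EV8 p S (fun R => f (T ∪ R))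
        ≤ EV8 p S (fun R => f R + ∑ u ∈ T, (f (insert u R) - f R)) := by
      refine EV8_mono hp0 hp1 S fun R hR => ?_
      exact submod_subadd hsub T R (hTS.mono_right (Finset.mem_powerset.1 hR))
    have h2 : EV8 p S (fun R => f R + ∑ u ∈ T, (f (insert u R) - f R))
        = EV8 p S f + ∑ u ∈ T, (EV8 p S (fun R => f (insert u R)) - EV8 p S f) := by
      rw [EV8_add p S f (fun R => ∑ u ∈ T, (f (insert u R) - f R)),
        EV8_sum p S T (fun u R => f (insert u R) - f R)]
      congr 1
      refine Finset.sum_congr rfl fun u _ => ?_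
      exact EV8_sub p S (fun R => f (insert u R)) f
    have h3 : ∑ u ∈ T, (EV8 p S (fun R => f (insert u R)) - EV8 p S f) ≤ c * τ := by
      have hkpos : (0:ℝ) < k := by exact_mod_cast Nat.lt_of_lt_of_le Nat.zero_lt_one hk
      have hbound : ∀ u ∈ T, EV8 p S (fun R => f (insert u R)) - EV8 p S f ≤ c * τ / k := by
        intro u hu
        rw [← hDeriv u hu]
        exact le_of_lt (hthresh u hu)
      calc ∑ u ∈ T, (EV8 p S (fun R => f (insert u R)) - EV8 p S f)
          ≤ T.card • (c * τ / k) := Finset.sum_le_card_nsmul T _ _ hbound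
        _ = (T.card : ℝ) * (c * τ / k) := by simp [nsmul_eq_mul]
        _ ≤ (k : ℝ) * (c * τ / k) := by
            apply mul_le_mul_of_nonneg_right
            · exact_mod_cast le_trans (Finset.card_le_card Finset.sdiff_subset) hO
            · positivity
        _ = c * τ := by field_simp
    linarith [h1, h2.le, h2.ge, h3]
  -- Step B : (1-p)(p f(O) + (1-p) f(T)) ≤ E[f(T ∪ R)]
  have hB : (1 - p) * (p * f O + (1 - p) * f T) ≤ EV8 p S (fun R => f (T ∪ R)) := by
    set g : Finset α → ℝ := fun R => f (T ∪ R) with hg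
    have hgsub : Submodular g := hsub.shift8 T
    have hdis : Disjoint I (S \ I) := Finset.disjoint_sdiff
    have hSplit : S = I ∪ (S \ I) := (Finset.union_sdiff_of_subset hIS).symm
    have hfact : EV8 p S g = EV8 p (S \ I) (fun R2 => EV8 p I (fun R1 => g (R1 ∪ R2))) := by
      conv_lhs => rw [hSplit]
      exact EV8_union p (S \ I) I g hdis
    have hinner : ∀ R2 ∈ (S \ I).powerset,
        (1 - p) * g R2 + p * g (I ∪ R2) ≤ EV8 p I (fun R1 => g (R1 ∪ R2)) := by
      intro R2 _
      have hsubm : Submodular (fun R1 => g (R1 ∪ R2)) := by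
        have h := hsub.shift8 (T ∪ R2)
        have heq : (fun R1 => f ((T ∪ R2) ∪ R1)) = fun R1 => g (R1 ∪ R2) := by
          funext R1
          simp only [hg]
          congr 1
          ext x
          simp only [Finset.mem_union]
          tauto
        rwa [heq] at h
      have h := EV8_concave hp0 hp1 I _ hsubm
      simpa [Finset.empty_union] using h
    have hstep : EV8 p (S \ I) (fun R2 => (1 - p) * g R2 + p * g (I ∪ R2))
        ≤ EV8 p (S \ I) (fun R2 => EV8 p I (fun R1 => g (R1 ∪ R2))) :=
      EV8_mono hp0 hp1 _ hinner
    rw [EV8_lin] at hstep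
    have hc1 : (1 - p) * g ∅ + p * g (S \ I) ≤ EV8 p (S \ I) g :=
      EV8_concave hp0 hp1 _ g hgsub
    have hsubm2 : Submodular (fun R2 => g (I ∪ R2)) := by
      have h := hsub.shift8 (T ∪ I)
      have heq : (fun R2 => f ((T ∪ I) ∪ R2)) = fun R2 => g (I ∪ R2) := by
        funext R2
        simp only [hg]
        congr 1
        ext x
        simp only [Finset.mem_union]
        tauto
      rwa [heq] at h
    have hc2 : (1 - p) * g I + p * g (I ∪ (S \ I)) ≤ EV8 p (S \ I) (fun R2 => g (I ∪ R2)) := by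
      have h := EV8_concave hp0 hp1 (S \ I) _ hsubm2
      simpa [Finset.union_empty] using h
    have hgI : g I = f O := by simp only [hg]; rw [hTI]
    have hgE : g ∅ = f T := by simp only [hg]; rw [Finset.union_empty]
    have hn1 : 0 ≤ g (S \ I) := hf0 _
    have hn2 : 0 ≤ g (I ∪ (S \ I)) := hf0 _
    rw [hfact]
    nlinarith [mul_le_mul_of_nonneg_left hc1 hq0, mul_le_mul_of_nonneg_left hc2 hp0,
      mul_nonneg (mul_nonneg hq0 hp0) hn1, mul_nonneg (mul_nonneg hp0 hp0) hn2,
      mul_nonneg hq0 hp0]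
  rw [hML]
  linarith [hA, hB]
end

section
/- Let f : 2^N → ℝ be a non-negative submodular function on a finite ground set N, let O, S ⊆ N be arbitrary sets, and let α ∈ (0,1], p ∈ [0,1), c ≥ 0 and τ ≥ 0 be reals with τ ≤ f(O). Then max{ (1 − p)·[p·f(O) + (1 − p)·f(O∖S)] − cτ , α·f(O∩S) } ≥ τ·α(1 − p − c)/(α + (1 − p)²). -/
open Finset

lemma submod_aux {α : Type*} [DecidableEq α] (f : Finset α → ℝ)
    (hsub : Submodular f) (A : Finset α) :
    ∀ B : Finset α, Disjoint A B → f (A ∪ B) - f B ≤ f A - f ∅ := by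
  induction A using Finset.induction_on with
  | empty => intro B _; simp
  | @insert u A' hu ih =>
      intro B hd
      have huB : u ∉ B := fun h => (Finset.disjoint_left.mp hd (mem_insert_self u A')) h
      have hd' : Disjoint A' B := hd.mono_left (subset_insert u A')
      have h1 := hsub A' (A' ∪ B) Finset.subset_union_left u (by simp [hu, huB])
      have h2 := ih B hd'
      have he : insert u A' ∪ B = insert u (A' ∪ B) := by
        simp [Finset.insert_union]
      rw [he]
      linarith

/-- (cf. Lemma `bound-solution`) For non-negative submodular `f`, sets
`O, S`, `a ∈ (0,1]`, `p ∈ [0,1)`, `c ≥ 0` and `0 ≤ τ ≤ f(O)`: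
`max{(1 − p)·[p·f(O) + (1 − p)·f(O∖S)] − cτ, a·f(O∩S)} ≥ τ·a(1 − p − c)/(a + (1 − p)²)`. -/
theorem stmt_9 {α : Type*} [Fintype α] [DecidableEq α] (f : Finset α → ℝ)
    (hf0 : ∀ A : Finset α, 0 ≤ f A) (hsub : Submodular f)
    (O S : Finset α) (a : ℝ) (ha : a ∈ Set.Ioc (0 : ℝ) 1)
    (p : ℝ) (hp : p ∈ Set.Ico (0 : ℝ) 1)
    (c τ : ℝ) (hc : 0 ≤ c) (hτ0 : 0 ≤ τ) (hτ : τ ≤ f O) :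
    τ * (a * (1 - p - c) / (a + (1 - p) ^ 2)) ≤
      max ((1 - p) * (p * f O + (1 - p) * f (O \ S)) - c * τ) (a * f (O ∩ S)) := by
  obtain ⟨ha0, ha1⟩ := ha
  obtain ⟨hp0, hp1⟩ := hp
  have hq : 0 < 1 - p := by linarith
  have hD : 0 < a + (1 - p) ^ 2 := by positivity
  have hkey : f O ≤ f (O ∩ S) + f (O \ S) := by
    have hd : Disjoint (O ∩ S) (O \ S) := by
      rw [Finset.disjoint_left]
      intro x hx hx2
      exact (Finset.mem_sdiff.mp hx2).2 (Finset.mem_inter.mp hx).2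
    have hu : O ∩ S ∪ O \ S = O := by
      ext x
      simp only [Finset.mem_union, Finset.mem_inter, Finset.mem_sdiff]
      tauto
    have h := submod_aux f hsub (O ∩ S) (O \ S) hd
    rw [hu] at h
    have h0 := hf0 (∅ : Finset α)
    linarith
  have hT0 := hf0 (O ∩ S)
  have hG0 := hf0 (O \ S)
  rw [show τ * (a * (1 - p - c) / (a + (1 - p) ^ 2)) =
      τ * (a * (1 - p - c)) / (a + (1 - p) ^ 2) by ring, div_le_iff₀ hD]
  rcases le_or_gt (1 - p - c) 0 with hqc | hqc
  · have h1 : τ * (a * (1 - p - c)) ≤ 0 := by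
      apply mul_nonpos_of_nonneg_of_nonpos hτ0
      exact mul_nonpos_of_nonneg_of_nonpos ha0.le hqc
    have h2 : 0 ≤ a * f (O ∩ S) := mul_nonneg ha0.le hT0
    calc τ * (a * (1 - p - c)) ≤ 0 := h1
      _ ≤ a * f (O ∩ S) * (a + (1 - p) ^ 2) := mul_nonneg h2 hD.le
      _ ≤ _ := by
          apply mul_le_mul_of_nonneg_right (le_max_right _ _) hD.le
  · rcases le_or_gt (τ * (1 - p - c)) (f (O ∩ S) * (a + (1 - p) ^ 2)) with hcase | hcase
    · calc τ * (a * (1 - p - c)) = a * (τ * (1 - p - c)) := by ring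
        _ ≤ a * (f (O ∩ S) * (a + (1 - p) ^ 2)) :=
            mul_le_mul_of_nonneg_left hcase ha0.le
        _ = a * f (O ∩ S) * (a + (1 - p) ^ 2) := by ring
        _ ≤ _ := mul_le_mul_of_nonneg_right (le_max_right _ _) hD.le
    · have hleft : τ * (a * (1 - p - c)) ≤
          ((1 - p) * (p * f O + (1 - p) * f (O \ S)) - c * τ) * (a + (1 - p) ^ 2) := by
        have hstep : (1 - p - c) * τ - (1 - p) ^ 2 * f (O ∩ S) ≤
            (1 - p) * (p * f O + (1 - p) * f (O \ S)) - c * τ := by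
          nlinarith [mul_nonneg (sq_nonneg (1 - p))
              (by linarith : (0:ℝ) ≤ f (O ∩ S) + f (O \ S) - f O),
            mul_nonneg hq.le (by linarith : (0:ℝ) ≤ f O - τ)]
        have h3 := mul_le_mul_of_nonneg_left hcase.le (sq_nonneg (1 - p))
        have h4 := mul_le_mul_of_nonneg_right hstep hD.le
        nlinarith [h3, h4]
      calc τ * (a * (1 - p - c)) ≤ _ := hleft
        _ ≤ _ := mul_le_mul_of_nonneg_right (le_max_left _ _) hD.le
end

section
/- Let f : 2^N → ℝ be a non-negative submodular function on a finite ground set N, let k ≥ 1 and m ≥ 1 be integers, and let V be a real number with f(T) ≤ V for every set T ⊆ N with |T| ≤ k. Then every set S ⊆ N with |S| ≤ m·k satisfies f(S) ≤ m·V. -/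
open Finset

lemma submod_gain {α : Type*} [DecidableEq α] {f : Finset α → ℝ}
    (hsub : Submodular f) :
    ∀ C A B : Finset α, A ⊆ B → Disjoint C B →
      f (B ∪ C) - f B ≤ f (A ∪ C) - f A := by
  intro C
  induction C using Finset.induction with
  | empty => intro A B _ _; simp
  | @insert u C' hu ih =>
    intro A B hAB hdisj
    have hd' : Disjoint C' B := (Finset.disjoint_insert_left.mp hdisj).2
    have huB : u ∉ B := (Finset.disjoint_insert_left.mp hdisj).1
    have h1 := ih A B hAB hd'
    have huBC : u ∉ B ∪ C' := by
      simp only [Finset.mem_union]; tauto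
    have h2 := hsub (A ∪ C') (B ∪ C') (Finset.union_subset_union_left hAB) u huBC
    have eA : A ∪ insert u C' = insert u (A ∪ C') := by
      ext x; simp [Finset.mem_insert, Finset.mem_union, or_assoc]
    have eB : B ∪ insert u C' = insert u (B ∪ C') := by
      ext x; simp [Finset.mem_insert, Finset.mem_union, or_assoc]
    rw [eA, eB]
    linarith

lemma submod_subadd_s15 {α : Type*} [DecidableEq α] {f : Finset α → ℝ}
    (hf0 : ∀ A : Finset α, 0 ≤ f A) (hsub : Submodular f)
    {B C : Finset α} (h : Disjoint C B) : f (B ∪ C) ≤ f B + f C := by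
  have := submod_gain hsub C ∅ B (Finset.empty_subset B) h
  simp only [Finset.empty_union] at this
  have h0 := hf0 ∅
  linarith

/-- For non-negative submodular `f`, integers `k, m ≥ 1`, and a real `V`
upper-bounding `f` on all sets of size at most `k`, every set `S` with `|S| ≤ m·k`
satisfies `f(S) ≤ m·V`. -/
theorem stmt_15 {α : Type*} [Fintype α] [DecidableEq α] (f : Finset α → ℝ)
    (hf0 : ∀ A : Finset α, 0 ≤ f A) (hsub : Submodular f)
    (k m : ℕ) (hk : 1 ≤ k) (hm : 1 ≤ m) (V : ℝ)
    (hV : ∀ T : Finset α, T.card ≤ k → f T ≤ V)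
    (S : Finset α) (hS : S.card ≤ m * k) :
    f S ≤ (m : ℝ) * V := by
  have hV0 : 0 ≤ V := le_trans (hf0 ∅) (hV ∅ (by simp))
  induction m, hm using Nat.le_induction generalizing S with
  | base => simpa using hV S (by simpa using hS)
  | succ n hn ih =>
      by_cases hle : S.card ≤ k
      · calc f S ≤ V := hV S hle
          _ ≤ ((n + 1 : ℕ) : ℝ) * V := by
              push_cast
              nlinarith [Nat.cast_nonneg (α := ℝ) n]
      · push_neg at hle
        obtain ⟨T, hTS, hTcard⟩ := Finset.exists_subset_card_eq (le_of_lt hle)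
        have hsplit : (S \ T) ∪ T = S := Finset.sdiff_union_of_subset hTS
        have hdisj : Disjoint T (S \ T) := (Finset.sdiff_disjoint).symm
        have hcard : (S \ T).card = S.card - k := by
          rw [Finset.card_sdiff_of_subset hTS, hTcard]
        have hmul : (n + 1) * k = n * k + k := Nat.succ_mul n k
        have hrest : (S \ T).card ≤ n * k := by omega
        have h1 := ih (S \ T) hrest
        have h2 := hV T (le_of_eq hTcard)
        have h3 := submod_subadd_s15 hf0 hsub hdisj
        rw [hsplit] at h3
        push_cast
        push_cast at h1
        linarith
end

section
/- Let k ≥ 1 and h ≥ 1 be integers, let N = U ∪ V ∪ {w} be a ground set where U = {u_1,…,u_{k−1}}, V = {v_1,…,v_h} and w are pairwise distinct elements, and define f : 2^N → ℝ by f(S) = |S| if w ∉ S, and f(S) = k + |S ∩ U| if w ∈ S. Then f is non-negative and submodular. -/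
open Finset

/-- (Hard instance from the inapproximability proof.) Let the ground set
be `N = U ∪ V ∪ {w}` with `|U| = k − 1`, `|V| = h` (`k, h ≥ 1`), where `U`, `V` and `w`
are pairwise disjoint, and define `f(S) = |S|` if `w ∉ S` and `f(S) = k + |S ∩ U|` if
`w ∈ S`. Then `f` is non-negative and submodular. -/
theorem stmt_17 {α : Type*} [Fintype α] [DecidableEq α] (k h : ℕ)
    (hk : 1 ≤ k) (hh : 1 ≤ h) (U V : Finset α) (w : α)
    (hU : U.card = k - 1) (hV : V.card = h) (hUV : Disjoint U V)
    (hwU : w ∉ U) (hwV : w ∉ V) (hcover : U ∪ V ∪ {w} = Finset.univ)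
    (f : Finset α → ℝ)
    (hf : ∀ S : Finset α,
      f S = if w ∈ S then (k : ℝ) + ((S ∩ U).card : ℝ) else (S.card : ℝ)) :
    (∀ S : Finset α, 0 ≤ f S) ∧ Submodular f := by
  have hcard : ∀ S : Finset α, w ∉ S → S.card = (S ∩ U).card + (S ∩ V).card := by
    intro S hwS
    have hS : S = (S ∩ U) ∪ (S ∩ V) := by
      ext x
      simp only [mem_union, mem_inter]
      constructor
      · intro hx
        have : x ∈ U ∪ V ∪ {w} := hcover ▸ mem_univ x
        simp only [mem_union, mem_singleton] at this
        rcases this with (hx' | hx') | hx'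
        · exact Or.inl ⟨hx, hx'⟩
        · exact Or.inr ⟨hx, hx'⟩
        · exact absurd (hx' ▸ hx) hwS
      · rintro (⟨hx, _⟩ | ⟨hx, _⟩) <;> exact hx
    have hd : Disjoint (S ∩ U) (S ∩ V) :=
      hUV.mono inter_subset_right inter_subset_right
    conv_lhs => rw [hS]
    rw [card_union_of_disjoint hd]
  constructor
  · intro S
    rw [hf]
    split <;> positivity
  · intro A B hAB u huB
    have huA : u ∉ A := fun hx => huB (hAB hx)
    rw [hf, hf, hf, hf]
    by_cases hu : u = w
    · subst hu
      have hwA : u ∉ A := huA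
      rw [if_pos (mem_insert_self u A), if_neg hwA,
        if_pos (mem_insert_self u B), if_neg huB,
        insert_inter_of_notMem hwU, insert_inter_of_notMem hwU,
        hcard A hwA, hcard B huB]
      push_cast
      have := card_le_card (inter_subset_inter hAB (Subset.refl V))
      have := (Nat.cast_le (α := ℝ)).2 this
      linarith
    · have hwiA : w ∈ insert u A ↔ w ∈ A := by
        rw [mem_insert]
        exact ⟨fun hx => hx.resolve_left (fun e => hu e.symm), Or.inr⟩
      have hwiB : w ∈ insert u B ↔ w ∈ B := by
        rw [mem_insert]
        exact ⟨fun hx => hx.resolve_left (fun e => hu e.symm), Or.inr⟩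
      by_cases hwA : w ∈ A
      · have hwB : w ∈ B := hAB hwA
        rw [if_pos (hwiA.2 hwA), if_pos hwA, if_pos (hwiB.2 hwB), if_pos hwB]
        by_cases huU : u ∈ U
        · rw [insert_inter_of_mem huU, insert_inter_of_mem huU,
            card_insert_of_notMem (fun hx => huA (mem_inter.1 hx).1),
            card_insert_of_notMem (fun hx => huB (mem_inter.1 hx).1)]
          push_cast; linarith
        · rw [insert_inter_of_notMem huU, insert_inter_of_notMem huU]
          linarith
      · rw [if_neg (fun hx => hwA (hwiA.1 hx)), if_neg hwA,
          card_insert_of_notMem huA]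
        by_cases hwB : w ∈ B
        · rw [if_pos (hwiB.2 hwB), if_pos hwB]
          have hle : ((insert u B ∩ U).card : ℝ) ≤ (B ∩ U).card + 1 := by
            have : (insert u B ∩ U).card ≤ (insert u (B ∩ U)).card := by
              apply card_le_card
              intro x hx
              rcases mem_inter.1 hx with ⟨hx1, hx2⟩
              rcases mem_insert.1 hx1 with rfl | hx1
              · exact mem_insert_self _ _
              · exact mem_insert_of_mem (mem_inter.2 ⟨hx1, hx2⟩)
            calc ((insert u B ∩ U).card : ℝ) ≤ ((insert u (B ∩ U)).card : ℝ) := by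
                  exact_mod_cast this
              _ ≤ (B ∩ U).card + 1 := by
                  have := card_insert_le u (B ∩ U)
                  exact_mod_cast this
          push_cast
          linarith
        · rw [if_neg (fun hx => hwB (hwiB.1 hx)), if_neg hwB,
            card_insert_of_notMem huB]
          push_cast; linarith
end
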